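/- arXiv:2503.19489 — 10 statements merged into one kernel-verified Lean document; each statement's English description precedes it below -/
import Mathlib

section
/- Let G be a θ_{2,2,3}-free graph with m edges and no isolated vertices, where m ≥ 57. Then the spectral radius of G satisfies λ(G) ≤ (1 + √(4m − 3))/2. -/
open SimpleGraph

/-- `F` is contained in `G` as a (not necessarily induced) subgraph. -/
def Contains {α β : Type*} (F : SimpleGraph α) (G : SimpleGraph β) : Prop :=
  ∃ f : α ↪ β, ∀ ⦃a b⦄, F.Adj a b → G.Adj (f a) (f b)

/-- The theta graph θ_{2,2,3}: vertices 0 = a, 1 = b, 2 = c₁, 3 = c₂, 4 = d₁, 5 = d₂,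
with edges ac₁, c₁b, ac₂, c₂b, ad₁, d₁d₂, d₂b. -/
def theta223 : SimpleGraph (Fin 6) :=
  SimpleGraph.fromRel (fun x y =>
    (x = 0 ∧ y = 2) ∨ (x = 2 ∧ y = 1) ∨ (x = 0 ∧ y = 3) ∨ (x = 3 ∧ y = 1) ∨
    (x = 0 ∧ y = 4) ∨ (x = 4 ∧ y = 5) ∨ (x = 5 ∧ y = 1))

open Classical in
/-- The real adjacency matrix of a simple graph. -/
noncomputable def adjMat {V : Type*} (G : SimpleGraph V) : Matrix V V ℝ :=
  Matrix.of fun a b => if G.Adj a b then 1 else 0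

/-- `lam` is the largest eigenvalue (spectral radius) of the adjacency matrix of `G`. -/
def IsSpectralRadius {V : Type*} [Fintype V] (G : SimpleGraph V) (lam : ℝ) : Prop :=
  (∃ v : V → ℝ, v ≠ 0 ∧ (adjMat G).mulVec v = lam • v) ∧
  ∀ (μ : ℝ) (v : V → ℝ), v ≠ 0 → (adjMat G).mulVec v = μ • v → μ ≤ lam

/-- The join K₂ ∨ kK₁ : two adjacent dominating vertices joined to k pairwise
nonadjacent vertices. -/
def K2JoinEmpty (k : ℕ) : SimpleGraph (Fin 2 ⊕ Fin k) :=
  SimpleGraph.fromRel (fun x _ => x.isLeft)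

/-- The star K_{1,r} with center 0 and r leaves. -/
def starGraph (r : ℕ) : SimpleGraph (Fin (r + 1)) :=
  SimpleGraph.fromRel (fun x _ => x = 0)

/-- The double star S_{1,2}: central edge 01, leaf 2 adjacent to 0, leaves 3, 4 adjacent to 1. -/
def doubleStarS12 : SimpleGraph (Fin 5) :=
  SimpleGraph.fromRel (fun x y =>
    (x = 0 ∧ y = 1) ∨ (x = 0 ∧ y = 2) ∨ (x = 1 ∧ y = 3) ∨ (x = 1 ∧ y = 4))

/-- K_{1,3}+e: the star with center 0 and leaves 1, 2, 3, plus the edge 12. -/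
def K13e : SimpleGraph (Fin 4) :=
  SimpleGraph.fromRel (fun x y => x = 0 ∨ (x = 1 ∧ y = 2))

/-- K₄ − e: the complete graph on four vertices minus the edge 23. -/
def K4e : SimpleGraph (Fin 4) :=
  SimpleGraph.fromRel (fun x y => ¬(x = 2 ∧ y = 3) ∧ ¬(x = 3 ∧ y = 2))


open Matrix Finset in
lemma perron {V : Type*} [Fintype V] [Nonempty V] (G : SimpleGraph V) (lam : ℝ)
    (hlam : IsSpectralRadius G lam) :
    ∃ (u : V) (x : V → ℝ), (∀ v, 0 ≤ x v) ∧ x u = 1 ∧ (∀ v, x v ≤ 1) ∧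
      (∀ v, ∑ w, adjMat G v w * x w = lam * x v) := by
  classical
  set A := adjMat G with hA
  have hA0 : ∀ i j, 0 ≤ A i j := by
    intro i j
    simp only [hA, adjMat, Matrix.of_apply]
    split <;> norm_num
  have hherm : A.IsHermitian := by
    unfold Matrix.IsHermitian
    ext i j
    simp only [Matrix.conjTranspose_apply, star_trivial, hA, adjMat, Matrix.of_apply]
    rw [G.adj_comm]
  have hsym : (Matrix.toEuclideanLin A).IsSymmetric :=
    Matrix.isHermitian_iff_isSymmetric.mp hherm
  set T' := hsym.toSelfAdjoint with hT'
  -- inner products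
  have hinner : ∀ y : EuclideanSpace ℝ V, T'.val.reApplyInnerSelf y
      = ∑ i, (∑ j, A i j * y j) * y i := by
    intro y
    unfold ContinuousLinearMap.reApplyInnerSelf
    rw [PiLp.inner_apply]
    simp only [RCLike.inner_apply, RCLike.re_to_real]
    refine Finset.sum_congr rfl fun i _ => ?_
    have h1 : ((T' : EuclideanSpace ℝ V →L[ℝ] EuclideanSpace ℝ V) y) i
        = (Matrix.toEuclideanLin A y) i := rfl
    rw [starRingEnd_apply, star_trivial, h1, Matrix.toEuclideanLin_apply]
    have h2 : (WithLp.toLp 2 (A *ᵥ y.ofLp)).ofLp i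
        = (A *ᵥ (fun j => y j)) i := rfl
    rw [h2]
    simp [Matrix.mulVec, dotProduct, mul_comm]
  obtain ⟨v0⟩ := (inferInstance : Nonempty V)
  have hSnorm : ∀ w : EuclideanSpace ℝ V, ∑ i, w i * w i = ‖w‖ ^ 2 := by
    intro w
    rw [← real_inner_self_eq_norm_sq, PiLp.inner_apply]
    simp [RCLike.inner_apply, pow_two]
  obtain ⟨yy, hyy⟩ : ∃ y : EuclideanSpace ℝ V, y ≠ 0 :=
    ⟨EuclideanSpace.single v0 1, by
      intro h
      have h2 : (EuclideanSpace.single v0 (1:ℝ)) v0 = 0 := by rw [h]; rfl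
      rw [EuclideanSpace.single_apply] at h2
      simp at h2⟩
  have hyypos : 0 < ‖yy‖ := norm_pos_iff.mpr hyy
  have H₁ : IsCompact (Metric.sphere (0 : EuclideanSpace ℝ V) ‖yy‖) := isCompact_sphere _ _
  have H₂ : (Metric.sphere (0 : EuclideanSpace ℝ V) ‖yy‖).Nonempty := ⟨yy, by simp⟩
  obtain ⟨y₀, hy₀s, hmax⟩ :=
    H₁.exists_isMaxOn H₂ T'.val.reApplyInnerSelf_continuous.continuousOn
  have hy₀n : ‖y₀‖ = ‖yy‖ := by simpa using hy₀s
  have hy₀ne : y₀ ≠ 0 := by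
    intro h
    apply hyy
    rw [← norm_eq_zero, ← hy₀n, h, norm_zero]
  set y₁ : EuclideanSpace ℝ V := (WithLp.equiv 2 (V → ℝ)).symm (fun i => |y₀ i|) with hy₁def
  have hy₁app : ∀ i, y₁ i = |y₀ i| := fun i => rfl
  have hy₁n : ‖y₁‖ = ‖y₀‖ := by
    rw [EuclideanSpace.norm_eq, EuclideanSpace.norm_eq]
    congr 1
    refine Finset.sum_congr rfl fun i _ => ?_
    rw [hy₁app]
    simp
  have hy₁ne : y₁ ≠ 0 := by
    intro h
    apply hy₀ne
    rw [← norm_eq_zero, ← hy₁n, h, norm_zero]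
  have hfcomp : T'.val.reApplyInnerSelf y₀ ≤ T'.val.reApplyInnerSelf y₁ := by
    rw [hinner, hinner]
    simp only [Finset.sum_mul, Finset.mul_sum]
    rw [← Finset.sum_product', ← Finset.sum_product']
    refine Finset.sum_le_sum fun p _ => ?_
    rw [hy₁app, hy₁app]
    calc A p.1 p.2 * y₀ p.2 * y₀ p.1 ≤ |A p.1 p.2 * y₀ p.2 * y₀ p.1| := le_abs_self _
    _ = A p.1 p.2 * |y₀ p.2| * |y₀ p.1| := by
        rw [abs_mul, abs_mul, abs_of_nonneg (hA0 p.1 p.2)]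
  have hmax₁ : IsMaxOn T'.val.reApplyInnerSelf
      (Metric.sphere (0 : EuclideanSpace ℝ V) ‖y₁‖) y₁ := by
    intro z hz
    rw [hy₁n, hy₀n] at hz
    exact le_trans (hmax hz) hfcomp
  have heig₁ := T'.prop.hasEigenvector_of_isMaxOn hy₁ne hmax₁
  set μ : ℝ := ⨆ x : { x : EuclideanSpace ℝ V // x ≠ 0 }, T'.val.rayleighQuotient x with hμ
  have heig₁' : Matrix.toEuclideanLin A y₁ = μ • y₁ := by
    have := Module.End.mem_eigenspace_iff.mp heig₁.1
    exact this
  have hpoint : ∀ i, ∑ j, A i j * y₁ j = μ * y₁ i := by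
    intro i
    have h1 : (Matrix.toEuclideanLin A y₁) i = (μ • y₁) i := by rw [heig₁']
    rw [Matrix.toEuclideanLin_apply] at h1
    have h2 : (WithLp.toLp 2 (A *ᵥ y₁.ofLp)).ofLp i
        = (A.mulVec (fun j => y₁ j)) i := rfl
    rw [h2] at h1
    simpa [Matrix.mulVec, dotProduct] using h1
  -- μ ≤ lam
  have hμle : μ ≤ lam := by
    refine hlam.2 μ (fun i => y₁ i) ?_ ?_
    · intro h
      apply hy₁ne
      ext i
      have : (fun i => y₁ i) i = (0 : V → ℝ) i := by rw [h]
      simpa using this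
    · ext i
      simp only [Matrix.mulVec, dotProduct, Pi.smul_apply, smul_eq_mul]
      exact hpoint i
  -- lam ≤ μ
  have hlamle : lam ≤ μ := by
    obtain ⟨v, hv0, hveq⟩ := hlam.1
    set vE : EuclideanSpace ℝ V := (WithLp.equiv 2 (V → ℝ)).symm v with hvE
    have hvEapp : ∀ i, vE i = v i := fun i => rfl
    have hvEne : vE ≠ 0 := by
      intro h
      apply hv0
      ext i
      have : vE i = (0 : EuclideanSpace ℝ V) i := by rw [h]
      simpa [hvEapp] using this
    have hvEpos : 0 < ‖vE‖ := norm_pos_iff.mpr hvEne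
    set c : ℝ := ‖yy‖ / ‖vE‖ with hc
    have hcpos : 0 < c := div_pos hyypos hvEpos
    set z : EuclideanSpace ℝ V := c • vE with hz
    have hzn : ‖z‖ = ‖yy‖ := by
      rw [hz, norm_smul, Real.norm_eq_abs, abs_of_pos hcpos, hc,
        div_mul_cancel₀ _ (ne_of_gt hvEpos)]
    have hzmem : z ∈ Metric.sphere (0 : EuclideanSpace ℝ V) ‖yy‖ := by
      rw [mem_sphere_zero_iff_norm]
      exact hzn
    have hzapp : ∀ i, z i = c * v i := fun i => rfl
    have hfz : T'.val.reApplyInnerSelf z = lam * ‖yy‖ ^ 2 := by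
      rw [hinner]
      have : ∀ i, ∑ j, A i j * z j = lam * z i := by
        intro i
        have h3 : A.mulVec v i = lam * v i := by
          rw [hveq]; simp
        simp only [hzapp]
        calc ∑ j, A i j * (c * v j) = c * ∑ j, A i j * v j := by
              rw [Finset.mul_sum]; exact Finset.sum_congr rfl fun j _ => by ring
        _ = c * (lam * v i) := by
              rw [← h3]; simp [Matrix.mulVec, dotProduct]
        _ = lam * (c * v i) := by ring
      calc ∑ i, (∑ j, A i j * z j) * z i = ∑ i, lam * (z i * z i) := by
            refine Finset.sum_congr rfl fun i _ => ?_
            rw [this i]; ring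
      _ = lam * ∑ i, z i * z i := by rw [Finset.mul_sum]
      _ = lam * ‖z‖ ^ 2 := by rw [hSnorm]
      _ = lam * ‖yy‖ ^ 2 := by rw [hzn]
    have hfy₀ : T'.val.reApplyInnerSelf y₀ = μ * ‖yy‖ ^ 2 := by
      have heig₀ := T'.prop.hasEigenvector_of_isMaxOn hy₀ne (by
        rw [hy₀n]; exact hmax)
      have heq : Matrix.toEuclideanLin A y₀ = μ • y₀ :=
        Module.End.mem_eigenspace_iff.mp heig₀.1
      have hpt : ∀ i, ∑ j, A i j * y₀ j = μ * y₀ i := by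
        intro i
        have h1 : (Matrix.toEuclideanLin A y₀) i = (μ • y₀) i := by rw [heq]
        rw [Matrix.toEuclideanLin_apply] at h1
        have h2 : (WithLp.toLp 2 (A *ᵥ y₀.ofLp)).ofLp i
            = (A.mulVec (fun j => y₀ j)) i := rfl
        rw [h2] at h1
        simpa [Matrix.mulVec, dotProduct] using h1
      rw [hinner]
      calc ∑ i, (∑ j, A i j * y₀ j) * y₀ i = ∑ i, μ * (y₀ i * y₀ i) := by
            refine Finset.sum_congr rfl fun i _ => ?_
            rw [hpt i]; ring
      _ = μ * ∑ i, y₀ i * y₀ i := by rw [Finset.mul_sum]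
      _ = μ * ‖y₀‖ ^ 2 := by rw [hSnorm]
      _ = μ * ‖yy‖ ^ 2 := by rw [hy₀n]
    have h5 : T'.val.reApplyInnerSelf z ≤ T'.val.reApplyInnerSelf y₀ := hmax hzmem
    rw [hfz, hfy₀] at h5
    have hsq : (0:ℝ) < ‖yy‖ ^ 2 := by positivity
    exact le_of_mul_le_mul_right (by linarith) hsq
  have hμlam : μ = lam := le_antisymm hμle hlamle
  -- choose max entry
  obtain ⟨u, -, humax⟩ := Finset.exists_max_image Finset.univ (fun i => y₁ i)
    ⟨v0, Finset.mem_univ v0⟩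
  have hy₁nonneg : ∀ i, 0 ≤ y₁ i := by
    intro i; rw [hy₁app]; exact abs_nonneg _
  have hupos : 0 < y₁ u := by
    rcases (em (∃ i, y₁ i ≠ 0)) with ⟨i, hi⟩ | h
    · exact lt_of_lt_of_le (lt_of_le_of_ne (hy₁nonneg i) (Ne.symm hi))
        (humax i (Finset.mem_univ i))
    · exfalso
      push_neg at h
      apply hy₁ne
      ext i
      exact h i
  refine ⟨u, fun v => y₁ v / y₁ u, fun v => div_nonneg (hy₁nonneg v) (le_of_lt hupos),
    div_self (ne_of_gt hupos), fun v => div_le_one_of_le₀ (humax v (Finset.mem_univ v))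
      (le_of_lt hupos), fun v => ?_⟩
  calc ∑ w, A v w * (y₁ w / y₁ u) = (∑ w, A v w * y₁ w) / y₁ u := by
        rw [Finset.sum_div]
        exact Finset.sum_congr rfl fun w _ => by ring
  _ = (μ * y₁ v) / y₁ u := by rw [hpoint v]
  _ = lam * (y₁ v / y₁ u) := by rw [hμlam]; ring


set_option maxRecDepth 4000 in
lemma embed_theta {V : Type*} (G : SimpleGraph V) (a b c1 c2 d1 d2 : V)
    (hab : a ≠ b) (had2 : a ≠ d2) (hc12 : c1 ≠ c2) (hc1d1 : c1 ≠ d1) (hc1d2 : c1 ≠ d2)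
    (hc2d1 : c2 ≠ d1) (hc2d2 : c2 ≠ d2) (hbd1 : b ≠ d1)
    (e1 : G.Adj a c1) (e2 : G.Adj c1 b) (e3 : G.Adj a c2) (e4 : G.Adj c2 b)
    (e5 : G.Adj a d1) (e6 : G.Adj d1 d2) (e7 : G.Adj d2 b) :
    Contains theta223 G := by
  have n1 := G.ne_of_adj e1
  have n2 := G.ne_of_adj e2
  have n3 := G.ne_of_adj e3
  have n4 := G.ne_of_adj e4
  have n5 := G.ne_of_adj e5
  have n6 := G.ne_of_adj e6
  have n7 := G.ne_of_adj e7
  have e2' := e2.symm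
  have e4' := e4.symm
  have e6' := e6.symm
  have e7' := e7.symm
  have e1' := e1.symm
  have e3' := e3.symm
  have e5' := e5.symm
  have h0 : ![a, b, c1, c2, d1, d2] (0 : Fin 6) = a := rfl
  have h1 : ![a, b, c1, c2, d1, d2] (1 : Fin 6) = b := rfl
  have h2 : ![a, b, c1, c2, d1, d2] (2 : Fin 6) = c1 := rfl
  have h3 : ![a, b, c1, c2, d1, d2] (3 : Fin 6) = c2 := rfl
  have h4 : ![a, b, c1, c2, d1, d2] (4 : Fin 6) = d1 := rfl
  have h5 : ![a, b, c1, c2, d1, d2] (5 : Fin 6) = d2 := rfl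
  refine ⟨⟨![a, b, c1, c2, d1, d2], ?_⟩, ?_⟩
  · intro i j hij
    fin_cases i <;> fin_cases j <;> simp_all [h0, h1, h2, h3, h4, h5]
  show ∀ ⦃i j⦄, theta223.Adj i j → G.Adj (![a, b, c1, c2, d1, d2] i) (![a, b, c1, c2, d1, d2] j)
  intro i j hadj
  rw [theta223, SimpleGraph.fromRel_adj] at hadj
  obtain ⟨-, h⟩ := hadj
  fin_cases i <;> fin_cases j <;> simp_all [h0, h1, h2, h3, h4, h5]


open Finset in
lemma cnt_lemma {α : Type*} [DecidableEq α] (N : Finset α) (r : α → α → Prop) [DecidableRel r]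
    (hsymm : ∀ v w, r v w → r w v) (hirr : ∀ v, ¬ r v v)
    (deg : α → ℕ) (hdegdef : ∀ v, deg v = (N.filter (fun w => r v w)).card)
    (hpos : 1 ≤ ∑ v ∈ N, deg v) :
    ∑ v ∈ N, deg v + 2 ≤
      2 * (N.filter (fun v => 1 ≤ deg v)).card +
      ∑ v ∈ N.filter (fun v => 2 ≤ deg v ∧ ∃ y ∈ N, r v y ∧ 2 ≤ deg y), (deg v - 1) := by
  classical
  set B : Finset α := N.filter (fun v => 2 ≤ deg v ∧ ∃ y ∈ N, r v y ∧ 2 ≤ deg y) with hB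
  set n1 : ℕ := (N.filter (fun v => deg v = 1)).card with hn1
  set D : ℕ := (N.filter (fun v => 2 ≤ deg v)).card with hD
  have hdeg_symm : ∀ w, (N.filter (fun v => r v w)).card = deg w := by
    intro w
    rw [hdegdef]
    congr 1
    apply Finset.filter_congr
    intro v _
    exact ⟨fun h => by simpa using hsymm v w (by simpa using h),
      fun h => by simpa using hsymm w v (by simpa using h)⟩
  have hplus : (N.filter (fun v => 1 ≤ deg v)).card = n1 + D := by
    have hsp : N.filter (fun v => 1 ≤ deg v)
        = N.filter (fun v => deg v = 1) ∪ N.filter (fun v => 2 ≤ deg v) := by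
      rw [← Finset.filter_or]
      apply Finset.filter_congr
      intro v _
      omega
    have hdisj : Disjoint (N.filter (fun v => deg v = 1)) (N.filter (fun v => 2 ≤ deg v)) := by
      rw [Finset.disjoint_left]
      intro a ha hb
      simp only [Finset.mem_filter] at ha hb
      omega
    rw [hsp, Finset.card_union_of_disjoint hdisj, hn1, hD]
  have hrow : ∀ v, deg v = (N.filter (fun w => r v w ∧ deg w ≤ 1)).card
      + (N.filter (fun w => r v w ∧ 2 ≤ deg w)).card := by
    intro v
    have hsp : N.filter (fun w => r v w)
        = N.filter (fun w => r v w ∧ deg w ≤ 1) ∪ N.filter (fun w => r v w ∧ 2 ≤ deg w) := by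
      rw [← Finset.filter_or]
      apply Finset.filter_congr
      intro w _
      constructor
      · intro h
        by_cases h2 : deg w ≤ 1
        · exact Or.inl ⟨h, h2⟩
        · exact Or.inr ⟨h, by omega⟩
      · rintro (⟨h, -⟩ | ⟨h, -⟩) <;> exact h
    have hdisj : Disjoint (N.filter (fun w => r v w ∧ deg w ≤ 1))
        (N.filter (fun w => r v w ∧ 2 ≤ deg w)) := by
      rw [Finset.disjoint_left]
      intro a ha hb
      simp only [Finset.mem_filter] at ha hb
      omega
    rw [hdegdef, hsp, Finset.card_union_of_disjoint hdisj]
  have hsub : ∀ (v : α) (p : α → Prop) (_ : DecidablePred p),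
      (N.filter (fun w => r v w ∧ p w)).card ≤ deg v := by
    intro v p hp
    rw [hdegdef]
    apply Finset.card_le_card
    intro w hw
    simp only [Finset.mem_filter] at hw ⊢
    exact ⟨hw.1, hw.2.1⟩
  have hP1 : ∑ v ∈ N, (N.filter (fun w => r v w ∧ deg w ≤ 1)).card ≤ n1 := by
    have e1 : ∑ v ∈ N, (N.filter (fun w => r v w ∧ deg w ≤ 1)).card
        = ∑ w ∈ N, (if deg w ≤ 1 then deg w else 0) := by
      calc ∑ v ∈ N, (N.filter (fun w => r v w ∧ deg w ≤ 1)).card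
          = ∑ v ∈ N, ∑ w ∈ N, (if r v w ∧ deg w ≤ 1 then 1 else 0) := by
            refine Finset.sum_congr rfl fun v _ => ?_
            rw [Finset.card_filter]
        _ = ∑ w ∈ N, ∑ v ∈ N, (if r v w ∧ deg w ≤ 1 then 1 else 0) := Finset.sum_comm
        _ = ∑ w ∈ N, (if deg w ≤ 1 then deg w else 0) := by
            refine Finset.sum_congr rfl fun w _ => ?_
            by_cases hdw : deg w ≤ 1
            · simp only [hdw, if_true]
              rw [← hdeg_symm w, Finset.card_filter]
              refine Finset.sum_congr rfl fun v _ => ?_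
              simp [hdw]
            · simp only [hdw, if_false]
              refine Finset.sum_eq_zero fun v _ => ?_
              simp [hdw]
    rw [e1, hn1, Finset.card_filter]
    refine Finset.sum_le_sum fun w _ => ?_
    by_cases h1 : deg w = 1
    · simp [h1]
    · by_cases h2 : deg w ≤ 1
      · have h0 : deg w = 0 := by omega
        simp [h0, h1]
      · simp [h1, h2]
  have hP2 : ∑ v ∈ N, (N.filter (fun w => r v w ∧ 2 ≤ deg w)).card
      ≤ n1 + ∑ v ∈ B, deg v := by
    have esplit : ∑ v ∈ N, (N.filter (fun w => r v w ∧ 2 ≤ deg w)).card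
        = ∑ v ∈ N.filter (fun v => deg v ≤ 1), (N.filter (fun w => r v w ∧ 2 ≤ deg w)).card
        + ∑ v ∈ N.filter (fun v => ¬ deg v ≤ 1), (N.filter (fun w => r v w ∧ 2 ≤ deg w)).card :=
      (Finset.sum_filter_add_sum_filter_not N (fun v => deg v ≤ 1) _).symm
    rw [esplit]
    have h1 : ∑ v ∈ N.filter (fun v => deg v ≤ 1), (N.filter (fun w => r v w ∧ 2 ≤ deg w)).card
        ≤ n1 := by
      calc ∑ v ∈ N.filter (fun v => deg v ≤ 1), (N.filter (fun w => r v w ∧ 2 ≤ deg w)).card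
          ≤ ∑ v ∈ N.filter (fun v => deg v ≤ 1), deg v :=
            Finset.sum_le_sum fun v _ => hsub v _ _
        _ ≤ ∑ v ∈ N.filter (fun v => deg v ≤ 1), (if deg v = 1 then 1 else 0) := by
            refine Finset.sum_le_sum fun v hv => ?_
            simp only [Finset.mem_filter] at hv
            by_cases h1 : deg v = 1
            · simp [h1]
            · have h0 : deg v = 0 := by omega
              simp [h0, h1]
        _ ≤ n1 := by
            rw [hn1, Finset.card_filter, Finset.sum_filter]
            refine Finset.sum_le_sum fun v _ => ?_
            by_cases h1 : deg v = 1
            · simp [h1]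
            · by_cases h2 : deg v ≤ 1 <;> simp [h1, h2]
    have h2 : ∑ v ∈ N.filter (fun v => ¬ deg v ≤ 1), (N.filter (fun w => r v w ∧ 2 ≤ deg w)).card
        ≤ ∑ v ∈ B, deg v := by
      have heq : ∑ v ∈ N.filter (fun v => ¬ deg v ≤ 1),
          (N.filter (fun w => r v w ∧ 2 ≤ deg w)).card
          = ∑ v ∈ B, (N.filter (fun w => r v w ∧ 2 ≤ deg w)).card := by
        rw [hB, Finset.sum_filter, Finset.sum_filter]
        refine Finset.sum_congr rfl fun v hv => ?_
        by_cases hd : deg v ≤ 1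
        · have hd2 : ¬ (2 ≤ deg v) := by omega
          simp [hd, hd2]
        · by_cases hy : ∃ y ∈ N, r v y ∧ 2 ≤ deg y
          · have hd2 : 2 ≤ deg v := by omega
            simp [hd, hy, hd2]
          · have hempty : (N.filter (fun w => r v w ∧ 2 ≤ deg w)).card = 0 := by
              rw [Finset.card_eq_zero, Finset.filter_eq_empty_iff]
              intro w hw
              push_neg
              intro hr
              by_contra hc
              push_neg at hc
              exact hy ⟨w, hw, hr, hc⟩
            simp [hd, hy, hempty]
      rw [heq]
      exact Finset.sum_le_sum fun v _ => hsub v _ _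
    omega
  have htot : ∑ v ∈ N, deg v ≤ 2 * n1 + ∑ v ∈ B, deg v := by
    calc ∑ v ∈ N, deg v = ∑ v ∈ N, ((N.filter (fun w => r v w ∧ deg w ≤ 1)).card
        + (N.filter (fun w => r v w ∧ 2 ≤ deg w)).card) :=
          Finset.sum_congr rfl fun v _ => hrow v
      _ = ∑ v ∈ N, (N.filter (fun w => r v w ∧ deg w ≤ 1)).card
          + ∑ v ∈ N, (N.filter (fun w => r v w ∧ 2 ≤ deg w)).card := Finset.sum_add_distrib
      _ ≤ 2 * n1 + ∑ v ∈ B, deg v := by omega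
  have hBD : B.card ≤ D := by
    rw [hB, hD]
    apply Finset.card_le_card
    intro v hv
    simp only [Finset.mem_filter] at hv ⊢
    exact ⟨hv.1, hv.2.1⟩
  have hBdegsum : ∑ v ∈ B, deg v = ∑ v ∈ B, (deg v - 1) + B.card := by
    rw [Finset.card_eq_sum_ones, ← Finset.sum_add_distrib]
    refine Finset.sum_congr rfl fun v hv => ?_
    rw [hB] at hv
    simp only [Finset.mem_filter] at hv
    omega
  have hB2 : B.Nonempty → 2 ≤ B.card := by
    rintro ⟨v, hv⟩
    have hv' := hv
    rw [hB] at hv'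
    simp only [Finset.mem_filter] at hv'
    obtain ⟨hvN, hdv, y, hyN, hry, hdy⟩ := hv'
    have hyB : y ∈ B := by
      rw [hB]
      simp only [Finset.mem_filter]
      exact ⟨hyN, hdy, v, hvN, hsymm v y hry, hdv⟩
    have hne : v ≠ y := fun h => hirr v (h ▸ hry)
    exact Finset.one_lt_card.mpr ⟨v, hv, y, hyB, hne⟩
  by_cases hBne : B.Nonempty
  · have := hB2 hBne
    rw [hplus]
    omega
  · have hBempty : B = ∅ := Finset.not_nonempty_iff_eq_empty.mp hBne
    have hBzero : ∑ v ∈ B, deg v = 0 := by rw [hBempty]; simp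
    have hBzero2 : ∑ v ∈ B, (deg v - 1) = 0 := by rw [hBempty]; simp
    by_cases hD1 : 1 ≤ D
    · rw [hplus]
      omega
    · have hall : ∀ v ∈ N, deg v ≤ 1 := by
        intro v hv
        by_contra hc
        have hmem : v ∈ N.filter (fun v => 2 ≤ deg v) := by
          simp only [Finset.mem_filter]
          exact ⟨hv, by omega⟩
        have : 1 ≤ D := by
          rw [hD]
          exact Finset.card_pos.mpr ⟨v, hmem⟩
        omega
      have hEH2n1 : ∑ v ∈ N, deg v ≤ n1 := by
        rw [hn1, Finset.card_filter]
        refine Finset.sum_le_sum fun v hv => ?_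
        have := hall v hv
        by_cases h1 : deg v = 1
        · simp [h1]
        · have h0 : deg v = 0 := by omega
          simp [h0, h1]
      have hn12 : 2 ≤ n1 := by
        obtain ⟨v, hvN, hv1⟩ : ∃ v ∈ N, 1 ≤ deg v := by
          by_contra hc
          push_neg at hc
          have : ∑ v ∈ N, deg v = 0 := Finset.sum_eq_zero fun v hv => by
            have := hc v hv; omega
          omega
        have hfil : (N.filter (fun w => r v w)).Nonempty := by
          rw [← Finset.card_pos, ← hdegdef]
          exact hv1
        obtain ⟨w, hw⟩ := hfil
        simp only [Finset.mem_filter] at hw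
        obtain ⟨hwN, hrvw⟩ := hw
        have hdw : 1 ≤ deg w := by
          rw [← hdeg_symm w]
          apply Finset.card_pos.mpr
          exact ⟨v, by simp only [Finset.mem_filter]; exact ⟨hvN, hrvw⟩⟩
        have hvw : v ≠ w := fun h => hirr v (h ▸ hrvw)
        have hd1v : deg v = 1 := by have := hall v hvN; omega
        have hd1w : deg w = 1 := by have := hall w hwN; omega
        rw [hn1]
        refine Finset.one_lt_card.mpr ⟨v, ?_, w, ?_, hvw⟩ <;> simp only [Finset.mem_filter]
        · exact ⟨hvN, hd1v⟩
        · exact ⟨hwN, hd1w⟩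
      rw [hplus]
      omega


open Matrix Finset in
set_option maxHeartbeats 1000000 in
theorem stmt0 {V : Type*} [Fintype V] (G : SimpleGraph V) (m : ℕ)
    (hm : G.edgeSet.ncard = m) (hm57 : 57 ≤ m)
    (hfree : ¬ Contains theta223 G)
    (hiso : ∀ v : V, ∃ w, G.Adj v w)
    (lam : ℝ) (hlam : IsSpectralRadius G lam) :
    lam ≤ (1 + Real.sqrt (4 * (m : ℝ) - 3)) / 2 := by
  classical
  by_contra hcon
  push_neg at hcon
  -- numeric setup
  have hm0 : (0:ℝ) ≤ 4 * (m:ℝ) - 3 := by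
    have : (57:ℝ) ≤ (m:ℝ) := by exact_mod_cast hm57
    linarith
  have h15 : (15:ℝ) ≤ Real.sqrt (4 * (m:ℝ) - 3) := by
    have h225 : (225:ℝ) ≤ 4 * (m:ℝ) - 3 := by
      have : (57:ℝ) ≤ (m:ℝ) := by exact_mod_cast hm57
      linarith
    have h15' : Real.sqrt 225 = 15 := by
      rw [show (225:ℝ) = 15 ^ 2 by norm_num, Real.sqrt_sq (by norm_num)]
    calc (15:ℝ) = Real.sqrt 225 := h15'.symm
      _ ≤ Real.sqrt (4 * (m:ℝ) - 3) := Real.sqrt_le_sqrt h225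
  have hlam8 : 8 < lam := by
    have := hcon
    nlinarith
  have hquad : (m:ℝ) - 1 < lam ^ 2 - lam := by
    have hs : Real.sqrt (4 * (m:ℝ) - 3) ^ 2 = 4 * (m:ℝ) - 3 := Real.sq_sqrt hm0
    have h2l : Real.sqrt (4 * (m:ℝ) - 3) < 2 * lam - 1 := by nlinarith
    have hsnn : 0 ≤ Real.sqrt (4 * (m:ℝ) - 3) := Real.sqrt_nonneg _
    nlinarith
  -- vertex existence
  have hedge : G.edgeSet.Nonempty := by
    apply Set.nonempty_of_ncard_ne_zero
    rw [hm]
    omega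
  have hVne : Nonempty V := by
    obtain ⟨e, -⟩ := hedge
    induction e using Sym2.ind with
    | _ a b => exact ⟨a⟩
  obtain ⟨u, x, hx0, hxu, hxle, heig⟩ := perron G lam hlam
  set A : Matrix V V ℝ := adjMat G with hA
  have hA01 : ∀ v w, A v w = if G.Adj v w then 1 else 0 := by
    intro v w
    by_cases h : G.Adj v w <;> simp [hA, adjMat, h]
  have hA0 : ∀ v w, 0 ≤ A v w := by
    intro v w; rw [hA01]; split <;> norm_num
  have hA1' : ∀ v w, A v w ≤ 1 := by
    intro v w; rw [hA01]; split <;> norm_num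
  have hAsymm : ∀ v w, A v w = A w v := by
    intro v w; rw [hA01, hA01]; by_cases h : G.Adj v w
    · simp [h, h.symm]
    · have h' : ¬ G.Adj w v := fun hh => h hh.symm
      simp [h, h']
  have hAdiag : ∀ v, A v v = 0 := by
    intro v; rw [hA01]; simp
  have hAadj : ∀ v w, G.Adj v w → A v w = 1 := by
    intro v w h; rw [hA01]; simp [h]
  have hAnadj : ∀ v w, ¬ G.Adj v w → A v w = 0 := by
    intro v w h; rw [hA01]; simp [h]
  -- the neighborhood and the rest
  set N : Finset V := Finset.univ.filter (fun v => G.Adj u v) with hN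
  set W : Finset V := Finset.univ.filter (fun w => w ≠ u ∧ ¬ G.Adj u w) with hW
  have hNmem : ∀ v, v ∈ N ↔ G.Adj u v := by
    intro v; rw [hN]; simp
  have hWmem : ∀ w, w ∈ W ↔ (w ≠ u ∧ ¬ G.Adj u w) := by
    intro w; rw [hW]; simp
  have huN : u ∉ N := by rw [hNmem]; exact fun h => G.irrefl h
  have huW : u ∉ W := by rw [hWmem]; tauto
  have hNW : Disjoint N W := by
    rw [Finset.disjoint_left]
    intro v hvN hvW
    rw [hNmem] at hvN
    rw [hWmem] at hvW
    exact hvW.2 hvN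
  have hsplit : ∀ f : V → ℝ, ∑ w, f w = f u + (∑ w ∈ N, f w + ∑ w ∈ W, f w) := by
    intro f
    have huniv : (Finset.univ : Finset V) = insert u (N ∪ W) := by
      ext v
      simp only [Finset.mem_univ, Finset.mem_insert, Finset.mem_union, true_iff]
      by_cases hv : v = u
      · exact Or.inl hv
      · by_cases ha : G.Adj u v
        · exact Or.inr (Or.inl ((hNmem v).mpr ha))
        · exact Or.inr (Or.inr ((hWmem v).mpr ⟨hv, ha⟩))
    rw [huniv, Finset.sum_insert (by
      rw [Finset.mem_union]
      tauto), Finset.sum_union hNW]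
  -- quantities
  set nH : V → ℝ := fun v => ∑ w ∈ N, A v w with hnH
  set kH : V → ℕ := fun v => (N.filter (fun w => G.Adj v w)).card with hkH
  set kW : V → ℝ := fun v => ∑ w ∈ W, A v w with hkW
  set sW : V → ℝ := fun v => ∑ w ∈ W, A v w * x w with hsW
  set nHx : V → ℝ := fun v => ∑ w ∈ N, A v w * x w with hnHx
  have hnHkH : ∀ v, nH v = (kH v : ℝ) := by
    intro v
    rw [hnH, hkH]
    simp only
    rw [Finset.card_filter]
    push_cast
    refine Finset.sum_congr rfl fun w _ => ?_
    by_cases h : G.Adj v w <;> simp [hA01, h]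
  have hnH0 : ∀ v, 0 ≤ nH v := fun v =>
    Finset.sum_nonneg fun w _ => hA0 v w
  have hkW0 : ∀ v, 0 ≤ kW v := fun v =>
    Finset.sum_nonneg fun w _ => hA0 v w
  have hsW0 : ∀ v, 0 ≤ sW v := fun v =>
    Finset.sum_nonneg fun w _ => mul_nonneg (hA0 v w) (hx0 w)
  have hsWkW : ∀ v, sW v ≤ kW v := by
    intro v
    refine Finset.sum_le_sum fun w _ => ?_
    calc A v w * x w ≤ A v w * 1 := by
          apply mul_le_mul_of_nonneg_left (hxle w) (hA0 v w)
      _ = A v w := mul_one _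
  have hnHx0 : ∀ v, 0 ≤ nHx v := fun v =>
    Finset.sum_nonneg fun w _ => mul_nonneg (hA0 v w) (hx0 w)
  have hnHxnH : ∀ v, nHx v ≤ nH v := by
    intro v
    refine Finset.sum_le_sum fun w _ => ?_
    calc A v w * x w ≤ A v w * 1 := by
          apply mul_le_mul_of_nonneg_left (hxle w) (hA0 v w)
      _ = A v w := mul_one _
  -- eigen equation decomposed
  have heig' : ∀ v, lam * x v = A v u * x u + (nHx v + sW v) := by
    intro v
    rw [← heig v, hsplit (fun w => A v w * x w), hnHx, hsW]
  have heigN : ∀ v ∈ N, lam * x v = 1 + (nHx v + sW v) := by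
    intro v hv
    rw [heig' v, hAadj v u ((hNmem v).mp hv).symm, hxu, mul_one]
  have heigW : ∀ w ∈ W, lam * x w = nHx w + sW w := by
    intro w hw
    rw [heig' w, hAnadj w u (fun h => ((hWmem w).mp hw).2 h.symm), hxu, zero_mul, zero_add]
  have hlam_sum : lam = ∑ v ∈ N, x v := by
    have h1 := heig' u
    rw [hxu, mul_one, hAdiag u, zero_mul, zero_add] at h1
    have h2 : sW u = 0 := by
      rw [hsW]
      refine Finset.sum_eq_zero fun w hw => ?_
      rw [hAnadj u w ((hWmem w).mp hw).2, zero_mul]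
    have h3 : nHx u = ∑ v ∈ N, x v := by
      rw [hnHx]
      refine Finset.sum_congr rfl fun w hw => ?_
      rw [hAadj u w ((hNmem w).mp hw), one_mul]
    rw [h2, h3, add_zero] at h1
    exact h1
  have hlam2 : lam * lam = (N.card : ℝ) + ((∑ v ∈ N, nHx v) + ∑ v ∈ N, sW v) := by
    calc lam * lam = ∑ v ∈ N, lam * x v := by
          rw [← Finset.mul_sum, ← hlam_sum]
      _ = ∑ v ∈ N, (1 + (nHx v + sW v)) := Finset.sum_congr rfl fun v hv => heigN v hv
      _ = (N.card : ℝ) + ((∑ v ∈ N, nHx v) + ∑ v ∈ N, sW v) := by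
          rw [Finset.sum_add_distrib, Finset.sum_add_distrib, Finset.sum_const, nsmul_eq_mul,
            mul_one]
  -- edge count
  have h2m : 2 * (m:ℝ) = ∑ v, ∑ w, A v w := by
    have hdeg_eq : ∀ v, (G.degree v : ℝ) = ∑ w, A v w := by
      intro v
      rw [SimpleGraph.degree, SimpleGraph.neighborFinset_eq_filter, Finset.card_filter]
      push_cast
      refine Finset.sum_congr rfl fun w _ => ?_
      by_cases h : G.Adj v w <;> simp [hA01, h]
    have hcard : G.edgeFinset.card = m := by
      rw [← hm, ← Set.ncard_coe_finset, SimpleGraph.coe_edgeFinset]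
    have hds := G.sum_degrees_eq_twice_card_edges
    rw [hcard] at hds
    calc 2 * (m:ℝ) = ((2 * m : ℕ) : ℝ) := by push_cast; ring
      _ = ((∑ v, G.degree v : ℕ) : ℝ) := by rw [hds]
      _ = ∑ v, ∑ w, A v w := by
          push_cast
          exact Finset.sum_congr rfl fun v _ => hdeg_eq v
  -- decompose 2m
  set EH2 : ℝ := ∑ v ∈ N, nH v with hEH2
  set EC : ℝ := ∑ v ∈ N, kW v with hEC
  set EW2 : ℝ := ∑ w ∈ W, kW w with hEW2
  have hrowu : ∑ w, A u w = (N.card : ℝ) := by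
    rw [hsplit (fun w => A u w), hAdiag u]
    have h1 : ∑ w ∈ N, A u w = (N.card : ℝ) := by
      rw [Finset.card_eq_sum_ones]
      push_cast
      refine Finset.sum_congr rfl fun w hw => ?_
      rw [hAadj u w ((hNmem w).mp hw)]
    have h2 : ∑ w ∈ W, A u w = 0 :=
      Finset.sum_eq_zero fun w hw => hAnadj u w ((hWmem w).mp hw).2
    rw [h1, h2]
    ring
  have hECW : ∑ w ∈ W, nH w = EC := by
    rw [hEC, hnH, hkW]
    simp only
    refine Finset.sum_comm.trans ?_
    refine Finset.sum_congr rfl fun v _ => Finset.sum_congr rfl fun w _ => hAsymm w v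
  have h2m' : 2 * (m:ℝ) = 2 * (N.card : ℝ) + EH2 + 2 * EC + EW2 := by
    rw [h2m, hsplit (fun v => ∑ w, A v w), hrowu]
    have hNrow : ∑ v ∈ N, (∑ w, A v w) = (N.card : ℝ) + EH2 + EC := by
      calc ∑ v ∈ N, (∑ w, A v w) = ∑ v ∈ N, (A v u + (nH v + kW v)) := by
            refine Finset.sum_congr rfl fun v hv => ?_
            rw [hsplit (fun w => A v w), hnH, hkW]
        _ = ∑ v ∈ N, (1 + (nH v + kW v)) := by
            refine Finset.sum_congr rfl fun v hv => ?_
            rw [hAadj v u ((hNmem v).mp hv).symm]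
        _ = (N.card : ℝ) + EH2 + EC := by
            rw [Finset.sum_add_distrib, Finset.sum_add_distrib, Finset.sum_const, nsmul_eq_mul,
              mul_one, hEH2, hEC]
            ring
    have hWrow : ∑ w ∈ W, (∑ z, A w z) = EC + EW2 := by
      calc ∑ w ∈ W, (∑ z, A w z) = ∑ w ∈ W, (A w u + (nH w + kW w)) := by
            refine Finset.sum_congr rfl fun w hw => ?_
            rw [hsplit (fun z => A w z), hnH, hkW]
        _ = ∑ w ∈ W, (nH w + kW w) := by
            refine Finset.sum_congr rfl fun w hw => ?_
            rw [hAnadj w u (fun h => ((hWmem w).mp hw).2 h.symm), zero_add]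
        _ = EC + EW2 := by
            rw [Finset.sum_add_distrib, hECW, hEW2]
    rw [hNrow, hWrow]
    ring
  -- swap for the weighted H-degree sum
  have hswap : ∑ v ∈ N, nHx v = ∑ w ∈ N, nH w * x w := by
    rw [hnHx, hnH]
    simp only
    rw [Finset.sum_comm]
    refine Finset.sum_congr rfl fun w _ => ?_
    rw [Finset.sum_mul]
    refine Finset.sum_congr rfl fun v _ => ?_
    rw [hAsymm w v]
  -- KEY inequality
  have hKEY : EH2 + 2 * (EC - ∑ v ∈ N, sW v) + EW2 - 2
      < 2 * (∑ w ∈ N, nH w * x w) - 2 * lam := by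
    have e1 : 2 * ((m:ℝ) - 1) < 2 * (lam ^ 2 - lam) := by linarith
    have e2 : lam ^ 2 = lam * lam := sq lam
    rw [← hswap]
    nlinarith [hlam2, h2m']
  -- the B set and slack quantities
  set Bs : Finset V := N.filter (fun v => 2 ≤ kH v ∧ ∃ y ∈ N, G.Adj v y ∧ 2 ≤ kH y) with hBs
  set NP : Finset V := N.filter (fun v => 1 ≤ kH v) with hNP
  have hBsN : ∀ v ∈ Bs, v ∈ N := by
    intro v hv; rw [hBs] at hv; exact (Finset.mem_filter.mp hv).1
  have hBsNP : Bs ⊆ NP := by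
    intro v hv
    rw [hBs] at hv
    rw [hNP, Finset.mem_filter]
    have := Finset.mem_filter.mp hv
    exact ⟨this.1, by omega⟩
  set SBx : ℝ := ∑ v ∈ Bs, (nH v - 1) * (1 - x v) with hSBx
  set SB : ℝ := ∑ v ∈ Bs, (nH v - 1) with hSB
  set ISO : ℝ := ∑ v ∈ N.filter (fun v => ¬ 1 ≤ kH v), x v with hISO
  set CSB : ℝ := ∑ v ∈ Bs, (kW v - sW v) with hCSB
  have hISO0 : 0 ≤ ISO := Finset.sum_nonneg fun v _ => hx0 v
  have hCS : CSB ≤ EC - ∑ v ∈ N, sW v := by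
    have : EC - ∑ v ∈ N, sW v = ∑ v ∈ N, (kW v - sW v) := by
      rw [hEC, Finset.sum_sub_distrib]
    rw [this, hCSB]
    apply Finset.sum_le_sum_of_subset_of_nonneg
    · intro v hv; exact hBsN v hv
    · intro v _ _
      have := hsWkW v
      linarith
  -- upper bound for the weighted H-degree sum
  have hupper : ∑ w ∈ N, nH w * x w ≤ lam + (EH2 - (NP.card : ℝ)) - SBx - ISO := by
    have e0 : ∑ w ∈ N, nH w * x w = ∑ w ∈ N, x w + ∑ w ∈ N, (nH w - 1) * x w := by
      rw [← Finset.sum_add_distrib]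
      refine Finset.sum_congr rfl fun w _ => by ring
    have esplit : ∑ w ∈ N, (nH w - 1) * x w
        = ∑ w ∈ NP, (nH w - 1) * x w
          + ∑ w ∈ N.filter (fun v => ¬ 1 ≤ kH v), (nH w - 1) * x w := by
      rw [hNP]
      exact (Finset.sum_filter_add_sum_filter_not N (fun v => 1 ≤ kH v) _).symm
    have eiso : ∑ w ∈ N.filter (fun v => ¬ 1 ≤ kH v), (nH w - 1) * x w = - ISO := by
      rw [hISO, ← Finset.sum_neg_distrib]
      refine Finset.sum_congr rfl fun w hw => ?_
      have hk0 : kH w = 0 := by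
        have := (Finset.mem_filter.mp hw).2
        omega
      have : nH w = 0 := by rw [hnHkH, hk0]; norm_num
      rw [this]
      ring
    have eNP : ∑ w ∈ NP, (nH w - 1) * x w
        = ∑ w ∈ NP, (nH w - 1) - ∑ w ∈ NP, (nH w - 1) * (1 - x w) := by
      rw [← Finset.sum_sub_distrib]
      refine Finset.sum_congr rfl fun w _ => by ring
    have eNP2 : ∑ w ∈ NP, (nH w - 1) = EH2 - (NP.card : ℝ) := by
      have h1 : ∑ w ∈ NP, (nH w - 1) = ∑ w ∈ NP, nH w - (NP.card : ℝ) := by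
        rw [Finset.sum_sub_distrib, Finset.sum_const, nsmul_eq_mul, mul_one]
      have h2 : ∑ w ∈ NP, nH w = EH2 := by
        rw [hEH2, hNP]
        rw [← Finset.sum_filter_add_sum_filter_not N (fun v => 1 ≤ kH v) nH]
        have : ∑ w ∈ N.filter (fun v => ¬ 1 ≤ kH v), nH w = 0 := by
          refine Finset.sum_eq_zero fun w hw => ?_
          have hk0 : kH w = 0 := by
            have := (Finset.mem_filter.mp hw).2
            omega
          rw [hnHkH, hk0]
          norm_num
        rw [this, add_zero]
      rw [h1, h2]
    have eSBx : SBx ≤ ∑ w ∈ NP, (nH w - 1) * (1 - x w) := by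
      rw [hSBx]
      apply Finset.sum_le_sum_of_subset_of_nonneg hBsNP
      intro v hv _
      apply mul_nonneg
      · have hk1 : 1 ≤ kH v := (Finset.mem_filter.mp ((hNP ▸ hv) : v ∈ N.filter _)).2
        rw [hnHkH]
        have : (1:ℝ) ≤ (kH v : ℝ) := by exact_mod_cast hk1
        linarith
      · have := hxle v; linarith
    rw [e0, esplit, eiso, eNP, ← hlam_sum, eNP2]
    linarith
  -- the star inequality
  have hSTAR : 2 * SBx + 2 * ISO + 2 * CSB + EW2 < EH2 - 2 * (NP.card : ℝ) + 2 := by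
    have h1 : 2 * (∑ w ∈ N, nH w * x w) - 2 * lam
        ≤ 2 * (EH2 - (NP.card : ℝ)) - 2 * SBx - 2 * ISO := by linarith
    have h2 := hKEY
    linarith [hCS]
  have hEH2cast : EH2 = ((∑ v ∈ N, kH v : ℕ) : ℝ) := by
    rw [hEH2]
    push_cast
    exact Finset.sum_congr rfl fun v _ => hnHkH v
  have hEW20 : 0 ≤ EW2 := Finset.sum_nonneg fun w _ => hkW0 w
  have hSBx0 : 0 ≤ SBx := by
    rw [hSBx]
    refine Finset.sum_nonneg fun v hv => ?_
    apply mul_nonneg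
    · have hk2 : 2 ≤ kH v := by
        rw [hBs] at hv
        exact (Finset.mem_filter.mp hv).2.1
      rw [hnHkH]
      have : (2:ℝ) ≤ (kH v : ℝ) := by exact_mod_cast hk2
      linarith
    · have := hxle v; linarith
  have hCSB0 : 0 ≤ CSB := Finset.sum_nonneg fun v _ => by
    have := hsWkW v; linarith
  -- degenerate case : no edges inside the neighborhood
  by_cases hEH2z : ∑ v ∈ N, kH v = 0
  · have hallz : ∀ v ∈ N, kH v = 0 := by
      intro v hv
      by_contra hc
      have h1 : 1 ≤ ∑ v ∈ N, kH v := by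
        calc 1 ≤ kH v := by omega
          _ ≤ ∑ v ∈ N, kH v := Finset.single_le_sum (fun _ _ => Nat.zero_le _) hv
      omega
    have hISOlam : ISO = lam := by
      rw [hISO, hlam_sum]
      apply Finset.sum_congr _ (fun _ _ => rfl)
      rw [Finset.filter_eq_self]
      intro v hv
      rw [hallz v hv]
      omega
    have hEH2zero : EH2 = 0 := by rw [hEH2cast, hEH2z]; norm_num
    have hNP0 : (0:ℝ) ≤ (NP.card : ℝ) := Nat.cast_nonneg _
    rw [hEH2zero, hISOlam] at hSTAR
    linarith
  -- main case : apply the counting lemma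
  have hcnt := cnt_lemma N G.Adj (fun v w h => h.symm) (fun v h => G.irrefl h) kH
    (fun v => by rw [hkH]) (by omega)
  have hSBcast : ((∑ v ∈ Bs, (kH v - 1) : ℕ) : ℝ) = SB := by
    rw [hSB]
    push_cast
    refine Finset.sum_congr rfl fun v hv => ?_
    have hk2 : 2 ≤ kH v := by
      rw [hBs] at hv
      exact (Finset.mem_filter.mp hv).2.1
    rw [hnHkH]
    have : (1:ℕ) ≤ kH v := by omega
    push_cast [Nat.cast_sub this]
    ring
  have hcntR : EH2 + 2 ≤ 2 * (NP.card : ℝ) + SB := by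
    rw [hEH2cast, ← hSBcast, hNP]
    exact_mod_cast hcnt
  -- combined strict inequality
  have hdagger : 2 * SBx + 2 * CSB + EW2 < SB := by linarith
  -- structural lemma M1 : vertices of B have H-degree at most 3
  have hB3 : ∀ v ∈ Bs, kH v ≤ 3 := by
    intro v hv
    by_contra hc
    push_neg at hc
    rw [hBs] at hv
    obtain ⟨hvN, hkv2, y, hyN, hvy, hky2⟩ := Finset.mem_filter.mp hv
    rw [hkH] at hc hky2
    simp only at hc hky2
    -- pick d1 adjacent to y, different from v
    have hd1e : ((N.filter (fun w => G.Adj y w)) \ {v}).Nonempty := by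
      rw [← Finset.card_pos]
      have hle := Finset.le_card_sdiff ({v} : Finset V) (N.filter (fun w => G.Adj y w))
      rw [Finset.card_singleton] at hle
      omega
    obtain ⟨d1, hd1⟩ := hd1e
    rw [Finset.mem_sdiff, Finset.mem_filter, Finset.mem_singleton] at hd1
    obtain ⟨⟨hd1N, hyd1⟩, hd1v⟩ := hd1
    -- pick c1 c2 adjacent to v avoiding y and d1
    have hc2e : 2 ≤ ((N.filter (fun w => G.Adj v w)) \ {y, d1}).card := by
      have hle := Finset.le_card_sdiff ({y, d1} : Finset V) (N.filter (fun w => G.Adj v w))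
      have hpair : ({y, d1} : Finset V).card ≤ 2 := Finset.card_insert_le _ _ |>.trans (by simp)
      omega
    obtain ⟨c1, hc1m, c2, hc2m, hc12⟩ := Finset.one_lt_card.mp hc2e
    rw [Finset.mem_sdiff, Finset.mem_filter, Finset.mem_insert, Finset.mem_singleton] at hc1m hc2m
    push_neg at hc1m hc2m
    obtain ⟨⟨hc1N, hvc1⟩, hc1y, hc1d1⟩ := hc1m
    obtain ⟨⟨hc2N, hvc2⟩, hc2y, hc2d1⟩ := hc2m
    exact hfree (embed_theta G u v c1 c2 d1 y
      (((hNmem v).mp hvN).ne) (((hNmem y).mp hyN).ne) hc12 hc1d1 hc1y hc2d1 hc2y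
      (fun h => hd1v h.symm)
      ((hNmem c1).mp hc1N) hvc1.symm ((hNmem c2).mp hc2N) hvc2.symm
      ((hNmem d1).mp hd1N) hyd1.symm hvy.symm)
  -- structural lemma M2 : W-neighbours of B have at most 3 neighbours in N
  have hW3 : ∀ w ∈ W, (∃ v ∈ Bs, G.Adj v w) → kH w ≤ 3 := by
    rintro w hwW ⟨v, hvB, hvw⟩
    by_contra hc
    push_neg at hc
    rw [hBs] at hvB
    obtain ⟨hvN, hkv2, -⟩ := Finset.mem_filter.mp hvB
    rw [hkH] at hc hkv2
    simp only at hc hkv2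
    -- pick y adjacent to v inside N
    have hye : (N.filter (fun z => G.Adj v z)).Nonempty := by
      rw [← Finset.card_pos]
      omega
    obtain ⟨y, hy⟩ := hye
    rw [Finset.mem_filter] at hy
    obtain ⟨hyN, hvy⟩ := hy
    -- pick c1 c2 adjacent to w inside N avoiding v and y
    have hc2e : 2 ≤ ((N.filter (fun z => G.Adj w z)) \ {v, y}).card := by
      have hle := Finset.le_card_sdiff ({v, y} : Finset V) (N.filter (fun z => G.Adj w z))
      have hpair : ({v, y} : Finset V).card ≤ 2 := Finset.card_insert_le _ _ |>.trans (by simp)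
      omega
    obtain ⟨c1, hc1m, c2, hc2m, hc12⟩ := Finset.one_lt_card.mp hc2e
    rw [Finset.mem_sdiff, Finset.mem_filter, Finset.mem_insert, Finset.mem_singleton] at hc1m hc2m
    push_neg at hc1m hc2m
    obtain ⟨⟨hc1N, hwc1⟩, hc1v, hc1y⟩ := hc1m
    obtain ⟨⟨hc2N, hwc2⟩, hc2v, hc2y⟩ := hc2m
    obtain ⟨hwu, hwnadj⟩ := (hWmem w).mp hwW
    have hwy : w ≠ y := by
      intro h
      exact hwnadj (h ▸ (hNmem y).mp hyN)
    exact hfree (embed_theta G u w c1 c2 y v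
      (fun h => hwu h.symm) (((hNmem v).mp hvN).ne) hc12 hc1y hc1v hc2y hc2v hwy
      ((hNmem c1).mp hc1N) hwc1.symm ((hNmem c2).mp hc2N) hwc2.symm
      ((hNmem y).mp hyN) hvy.symm hvw)
  -- quantitative estimates
  set rho : V → ℝ := fun v => ∑ w ∈ W, A v w * sW w with hrho
  have hrho0 : ∀ v, 0 ≤ rho v := fun v =>
    Finset.sum_nonneg fun w _ => mul_nonneg (hA0 v w) (hsW0 w)
  have hf2 : ∀ v ∈ Bs, lam * x v ≤ 4 + sW v := by
    intro v hv
    have h1 := heigN v (hBsN v hv)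
    have h2 : nHx v ≤ 3 := by
      calc nHx v ≤ nH v := hnHxnH v
        _ = (kH v : ℝ) := hnHkH v
        _ ≤ 3 := by exact_mod_cast hB3 v hv
    linarith
  have hf3 : ∀ v ∈ Bs, lam * sW v ≤ 3 * kW v + rho v := by
    intro v hv
    have h1 : lam * sW v = ∑ w ∈ W, A v w * (lam * x w) := by
      rw [hsW, Finset.mul_sum]
      exact Finset.sum_congr rfl fun w _ => by ring
    rw [h1, hkW, hrho]
    have h2 : ∑ w ∈ W, A v w * (lam * x w) ≤ ∑ w ∈ W, A v w * (3 + sW w) := by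
      refine Finset.sum_le_sum fun w hw => ?_
      by_cases hadj : G.Adj v w
      · have hA1 : A v w = 1 := hAadj v w hadj
        rw [hA1, one_mul, one_mul]
        have h3 := heigW w hw
        have h4 : nHx w ≤ 3 := by
          calc nHx w ≤ nH w := hnHxnH w
            _ = (kH w : ℝ) := hnHkH w
            _ ≤ 3 := by
                exact_mod_cast hW3 w hw ⟨v, hv, hadj⟩
        linarith
      · rw [hAnadj v w hadj, zero_mul, zero_mul]
    calc ∑ w ∈ W, A v w * (lam * x w) ≤ ∑ w ∈ W, A v w * (3 + sW w) := h2
      _ = 3 * ∑ w ∈ W, A v w + ∑ w ∈ W, A v w * sW w := by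
          rw [Finset.mul_sum, ← Finset.sum_add_distrib]
          exact Finset.sum_congr rfl fun w _ => by ring
  have hf4 : ∀ v ∈ Bs, (nH v - 1)
      ≤ 2 * ((nH v - 1) * (1 - x v)) + 2 * (kW v - sW v) + (5/16) * rho v := by
    intro v hv
    have h8x : 8 * x v ≤ 4 + sW v := by
      have h1 : 8 * x v ≤ lam * x v :=
        mul_le_mul_of_nonneg_right (le_of_lt hlam8) (hx0 v)
      linarith [hf2 v hv]
    have h8s : 8 * sW v ≤ 3 * kW v + rho v := by
      have h1 : 8 * sW v ≤ lam * sW v :=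
        mul_le_mul_of_nonneg_right (le_of_lt hlam8) (hsW0 v)
      linarith [hf3 v hv]
    have hk23 : kH v = 2 ∨ kH v = 3 := by
      have h2 : 2 ≤ kH v := by
        rw [hBs] at hv
        exact (Finset.mem_filter.mp hv).2.1
      have h3 := hB3 v hv
      omega
    rcases hk23 with hk | hk <;>
      rw [hnHkH v, hk] <;> push_cast <;>
      linarith [hsWkW v, hsW0 v, hrho0 v, hxle v, hx0 v]
  have hf5 : ∑ v ∈ Bs, rho v ≤ 3 * EW2 := by
    have h1 : ∑ v ∈ Bs, rho v = ∑ w ∈ W, (∑ v ∈ Bs, A v w) * sW w := by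
      rw [hrho]
      simp only
      rw [Finset.sum_comm]
      refine Finset.sum_congr rfl fun w _ => ?_
      rw [Finset.sum_mul]
    have h2 : ∀ w ∈ W, (∑ v ∈ Bs, A v w) * sW w ≤ 3 * sW w := by
      intro w hw
      by_cases hex : ∃ v ∈ Bs, G.Adj v w
      · have h3 : ∑ v ∈ Bs, A v w ≤ 3 := by
          calc ∑ v ∈ Bs, A v w
              ≤ ∑ v ∈ N, A v w :=
                Finset.sum_le_sum_of_subset_of_nonneg (fun v hv => hBsN v hv)
                  (fun v _ _ => hA0 v w)
            _ = nH w := by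
                rw [hnH]
                exact Finset.sum_congr rfl fun v _ => hAsymm v w
            _ = (kH w : ℝ) := hnHkH w
            _ ≤ 3 := by exact_mod_cast hW3 w hw hex
        exact mul_le_mul_of_nonneg_right h3 (hsW0 w)
      · have h3 : ∑ v ∈ Bs, A v w = 0 := by
          refine Finset.sum_eq_zero fun v hv => ?_
          apply hAnadj
          intro hadj
          exact hex ⟨v, hv, hadj⟩
        rw [h3, zero_mul]
        have := hsW0 w
        linarith
    calc ∑ v ∈ Bs, rho v = ∑ w ∈ W, (∑ v ∈ Bs, A v w) * sW w := h1
      _ ≤ ∑ w ∈ W, 3 * sW w := Finset.sum_le_sum h2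
      _ ≤ ∑ w ∈ W, 3 * kW w := by
          refine Finset.sum_le_sum fun w _ => ?_
          have := hsWkW w
          linarith
      _ = 3 * EW2 := by rw [hEW2, Finset.mul_sum]
  -- final contradiction
  have hQUANT : SB ≤ 2 * SBx + 2 * CSB + EW2 := by
    calc SB ≤ ∑ v ∈ Bs, (2 * ((nH v - 1) * (1 - x v)) + 2 * (kW v - sW v) + (5/16) * rho v) := by
          rw [hSB]
          exact Finset.sum_le_sum hf4
      _ = 2 * SBx + 2 * CSB + (5/16) * ∑ v ∈ Bs, rho v := by
          rw [hSBx, hCSB, Finset.sum_add_distrib, Finset.sum_add_distrib, Finset.mul_sum,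
            Finset.mul_sum, Finset.mul_sum]
      _ ≤ 2 * SBx + 2 * CSB + EW2 := by
          have := hf5
          linarith
  linarith
end

section
/- Let G be a θ_{2,2,3}-free graph and let u* be any vertex of G. Then the subgraph of G induced on the neighborhood N(u*) contains no double star S_{1,2} as a subgraph. -/
open SimpleGraph

theorem stmt4 {V : Type*} (G : SimpleGraph V) (hfree : ¬ Contains theta223 G)
    (ustar : V) :
    ¬ Contains doubleStarS12 (G.induce (G.neighborSet ustar)) := by
  rintro ⟨f, hf⟩
  apply hfree
  have hvinj : Function.Injective (fun i => ((f i : V))) :=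
    fun i j h => f.injective (Subtype.val_injective h)
  have hadjstar : ∀ i, G.Adj ustar ((f i : V)) := fun i => (f i).2
  have hds : ∀ {i j : Fin 5}, i ≠ j →
      ((i = 0 ∧ j = 1) ∨ (i = 0 ∧ j = 2) ∨ (i = 1 ∧ j = 3) ∨ (i = 1 ∧ j = 4)) →
      G.Adj ((f i : V)) ((f j : V)) := by
    intro i j hij hrel
    exact hf (by rw [doubleStarS12, SimpleGraph.fromRel_adj]; exact ⟨hij, Or.inl hrel⟩)
  have e01 : G.Adj ((f 0 : V)) ((f 1 : V)) := hds (by decide) (by decide)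
  have e02 : G.Adj ((f 0 : V)) ((f 2 : V)) := hds (by decide) (by decide)
  have e13 : G.Adj ((f 1 : V)) ((f 3 : V)) := hds (by decide) (by decide)
  have e14 : G.Adj ((f 1 : V)) ((f 4 : V)) := hds (by decide) (by decide)
  have hne : ∀ i, ustar ≠ ((f i : V)) := fun i => (hadjstar i).ne
  -- embedding of theta223: 0 ↦ u*, 1 ↦ v1, 2 ↦ v3, 3 ↦ v4, 4 ↦ v2, 5 ↦ v0
  refine ⟨⟨fun i => match i with
    | 0 => ustar | 1 => (f 1 : V) | 2 => (f 3 : V)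
    | 3 => (f 4 : V) | 4 => (f 2 : V) | 5 => (f 0 : V), ?_⟩, ?_⟩
  · intro a b hab
    fin_cases a <;> fin_cases b <;>
      first
        | rfl
        | exact absurd hab (hne _)
        | exact absurd hab.symm (hne _)
        | exact absurd (hvinj hab) (by decide)
  · intro a b hab
    rw [theta223, SimpleGraph.fromRel_adj] at hab
    obtain ⟨-, h | h⟩ := hab <;>
      rcases h with ⟨rfl, rfl⟩ | ⟨rfl, rfl⟩ | ⟨rfl, rfl⟩ | ⟨rfl, rfl⟩ |
        ⟨rfl, rfl⟩ | ⟨rfl, rfl⟩ | ⟨rfl, rfl⟩ <;>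
      first
        | exact hadjstar _
        | exact (hadjstar _).symm
        | exact e01 | exact e01.symm
        | exact e02 | exact e02.symm
        | exact e13 | exact e13.symm
        | exact e14 | exact e14.symm
end

section
/- Let H be a connected graph with at least one edge that contains no double star S_{1,2} as a subgraph. Then H is isomorphic to one of: a star K_{1,r} with r ≥ 1, the graph K_{1,3}+e, K₄ − e, K₄, a path P_k with k ≥ 4 vertices, or a cycle C_l with l ≥ 3. -/
open SimpleGraph

section Aux
universe u
variable {W : Type u}

def AtMostTwoNbrs (G : SimpleGraph W) : Prop :=
  ∀ ⦃v a b c : W⦄, G.Adj v a → G.Adj v b → G.Adj v c → a = b ∨ b = c ∨ a = c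

def UniqueNbr (G : SimpleGraph W) (v u : W) : Prop :=
  G.Adj v u ∧ ∀ ⦃w⦄, G.Adj v w → w = u

lemma closed_mem_of_walk {G : SimpleGraph W} (T : Set W)
    (hT : ∀ ⦃x⦄, x ∈ T → ∀ ⦃y⦄, G.Adj x y → y ∈ T) :
    ∀ {x y : W}, G.Walk x y → x ∈ T → y ∈ T := by
  intro x y p
  induction p with
  | nil => exact id
  | cons h q ih => exact fun hx => ih (hT hx h)

lemma closed_eq_univ {G : SimpleGraph W} (hc : G.Preconnected) (T : Set W)
    (hT : ∀ ⦃x⦄, x ∈ T → ∀ ⦃y⦄, G.Adj x y → y ∈ T) {x0 : W} (hx0 : x0 ∈ T) (y : W) : y ∈ T := by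
  obtain ⟨p⟩ := hc x0 y
  exact closed_mem_of_walk T hT p hx0

/-- deleting a degree-1 vertex keeps reachability -/
lemma reach_del {G : SimpleGraph W} {v0 u : W} (hv0 : UniqueNbr G v0 u) :
    ∀ (n : ℕ) {x y : W} (p : G.Walk x y), p.length = n → ∀ (hx : x ≠ v0) (hy : y ≠ v0),
      (G.induce {z | z ≠ v0}).Reachable ⟨x, hx⟩ ⟨y, hy⟩ := by
  have hu' : u ≠ v0 := hv0.1.ne'
  intro n
  induction n using Nat.strong_induction_on with
  | _ n ih =>
    intro x y p hl hx hy
    cases p with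
    | nil => exact Reachable.refl _
    | @cons _ z _ h q =>
      by_cases hz : z = v0
      · have hxu : x = u := hv0.2 (hz ▸ h.symm)
        cases q with
        | nil => exact absurd hz hy
        | @cons _ w _ h2 q2 =>
          have hwu : w = u := hv0.2 (hz ▸ h2)
          have hw : w ≠ v0 := hwu.trans_ne hu'
          have hlen : q2.length + 2 = n := by simpa [SimpleGraph.Walk.length_cons] using hl
          have := ih (q2.length) (by omega) q2 rfl hw hy
          have hxw : (⟨x, hx⟩ : {z : W // z ≠ v0}) = ⟨w, hw⟩ := by
            exact Subtype.ext (hxu.trans hwu.symm)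
          rwa [hxw]
      · have hadj : (G.induce {z | z ≠ v0}).Adj ⟨x, hx⟩ ⟨z, hz⟩ := h
        exact hadj.reachable.trans (ih q.length (by simp [← hl]) q rfl hz hy)

lemma atMostTwo_induce {G : SimpleGraph W} (h : AtMostTwoNbrs G) (s : Set W) :
    AtMostTwoNbrs (G.induce s) := by
  intro v a b c ha hb hc
  rcases h (ha : G.Adj v.val a.val) (hb : G.Adj v.val b.val) (hc : G.Adj v.val c.val) with h' | h' | h'
  · exact Or.inl (Subtype.ext h')
  · exact Or.inr (Or.inl (Subtype.ext h'))
  · exact Or.inr (Or.inr (Subtype.ext h'))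

/-- L1: connected + max degree ≤ 2 + a degree-one vertex gives a path -/
lemma path_classify : ∀ (n : ℕ) {W : Type u} [Fintype W] (G : SimpleGraph W),
    Fintype.card W = n → G.Connected → AtMostTwoNbrs G →
    ∀ {v0 u : W}, UniqueNbr G v0 u →
    ∃ e : G ≃g pathGraph n, (e v0).val = 0 := by
  intro n
  induction n using Nat.strong_induction_on with
  | _ n ih =>
    intro W _ G hcard hconn h2 v0 u hu
    haveI := Classical.decEq W
    have hvu : v0 ≠ u := hu.1.ne
    by_cases hA : ∀ ⦃w⦄, G.Adj u w → w = v0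
    · -- two vertices only
      have hcov : ∀ y : W, y = v0 ∨ y = u := by
        have := closed_eq_univ hconn.preconnected {y | y = v0 ∨ y = u}
          (by rintro x (rfl | rfl) y hadj
              · exact Or.inr (hu.2 hadj)
              · exact Or.inl (hA hadj)) (Or.inl rfl)
        exact this
      have h2n : n = 2 := by
        rw [← hcard]
        rw [show (2 : ℕ) = Fintype.card (Fin 2) by simp]
        apply Fintype.card_congr
        exact ⟨fun w => if w = v0 then 0 else 1, ![v0, u],
          by intro w
             rcases hcov w with rfl | rfl
             · simp
             · simp [hvu.symm, Matrix.cons_val_one],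
          by intro i
             fin_cases i
             · simp
             · simp [Matrix.cons_val_one, hvu.symm]⟩
      subst h2n
      refine ⟨⟨⟨fun w => if w = v0 then ⟨0, by omega⟩ else ⟨1, by omega⟩,
        ![v0, u], ?_, ?_⟩, ?_⟩, ?_⟩
      · intro w
        rcases hcov w with rfl | rfl
        · simp
        · simp [hvu.symm, Matrix.cons_val_one]
      · intro i
        fin_cases i
        · simp
        · simp [Matrix.cons_val_one, hvu.symm]
      · intro a b
        simp only [Equiv.coe_fn_mk]
        rcases hcov a with rfl | rfl <;> rcases hcov b with rfl | rfl
        · simp [pathGraph_adj]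
        · simp [hvu.symm, pathGraph_adj, hu.1]
        · simp [hvu.symm, pathGraph_adj, hu.1.symm]
        · simp [hvu.symm, pathGraph_adj]
      · simp
    · push_neg at hA
      obtain ⟨w, hw, hwv0⟩ := hA
      have hu' : (u : W) ≠ v0 := hu.1.ne'
      have hn2 : 2 ≤ n := by
        rw [← hcard]
        exact Fintype.one_lt_card_iff_nontrivial.mpr ⟨v0, u, hvu⟩
      obtain ⟨m, rfl⟩ : ∃ m, n = m + 1 := ⟨n - 1, by omega⟩
      set s : Set W := {z | z ≠ v0} with hs
      have hcard' : Fintype.card s = m := by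
        have h1 : Fintype.card {z : W // ¬ (z = v0)} = Fintype.card W - Fintype.card {z : W // z = v0} :=
          Fintype.card_subtype_compl _
        rw [Fintype.card_subtype_eq] at h1
        have : Fintype.card s = Fintype.card {z : W // ¬ (z = v0)} := rfl
        rw [this, h1, hcard]
        omega
      have hconn' : (G.induce s).Connected := by
        rw [connected_iff]
        refine ⟨fun x y => ?_, ⟨⟨u, hu'⟩⟩⟩
        obtain ⟨p⟩ := hconn.preconnected x.val y.val
        exact reach_del hu p.length p rfl x.prop y.prop
      have h2' : AtMostTwoNbrs (G.induce s) := atMostTwo_induce h2 s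
      have hu'' : UniqueNbr (G.induce s) ⟨u, hu'⟩ ⟨w, hwv0⟩ := by
        constructor
        · exact hw
        · rintro ⟨t, ht⟩ hadj
          have hat : G.Adj u t := hadj
          rcases h2 hat (hu.1.symm) hw with h' | h' | h'
          · exact absurd h' ht
          · exact absurd h'.symm hwv0
          · exact Subtype.ext h'
      obtain ⟨e', he'⟩ := ih m (by omega) (G.induce s) hcard' hconn' h2' hu''
      have hm1 : 1 ≤ m := by
        rw [← hcard']
        exact Fintype.card_pos_iff.mpr ⟨⟨u, hu'⟩⟩
      have hvadj : ∀ ⦃x : W⦄, G.Adj v0 x ↔ x = u :=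
        fun x => ⟨fun h => hu.2 h, fun h => h ▸ hu.1⟩
      refine ⟨⟨⟨fun x => if h : x = v0 then (0 : Fin (m + 1)) else (e' ⟨x, h⟩).succ,
        fun i => Fin.cases v0 (fun j => (e'.symm j).val) i, ?_, ?_⟩, ?_⟩, ?_⟩
      · intro x
        by_cases h : x = v0
        · simp [h]
        · simp [h]
      · intro i
        induction i using Fin.cases with
        | zero => simp
        | succ j =>
          have hj : ((e'.symm j).val : W) ≠ v0 := (e'.symm j).prop
          simp [hj]
      · intro a b
        simp only [Equiv.coe_fn_mk]
        by_cases ha : a = v0 <;> by_cases hb : b = v0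
        · subst ha; subst hb
          simp [pathGraph_adj]
        · subst ha
          rw [dif_pos rfl, dif_neg hb, pathGraph_adj]
          have hb' : (b : W) ∈ s := hb
          constructor
          · intro hh
            have : (e' ⟨b, hb⟩).val = 0 := by
              simp [Fin.val_succ] at hh
              omega
            have : e' ⟨b, hb⟩ = e' ⟨u, hu'⟩ := Fin.ext (this.trans he'.symm)
            have := e'.injective this
            have hbu : b = u := congrArg Subtype.val this
            rw [hvadj]; exact hbu
          · intro hh
            have hbu : b = u := hvadj.mp hh
            have : e' ⟨b, hb⟩ = e' ⟨u, hu'⟩ := by congr 1; exact Subtype.ext hbu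
            left
            simp [this, he', Fin.val_succ]
        · subst hb
          rw [dif_pos rfl, dif_neg ha, pathGraph_adj]
          constructor
          · intro hh
            have : (e' ⟨a, ha⟩).val = 0 := by
              simp [Fin.val_succ] at hh
              omega
            have : e' ⟨a, ha⟩ = e' ⟨u, hu'⟩ := Fin.ext (this.trans he'.symm)
            have := e'.injective this
            have hau : a = u := congrArg Subtype.val this
            rw [adj_comm, hvadj]; exact hau
          · intro hh
            have hau : a = u := hvadj.mp hh.symm
            have : e' ⟨a, ha⟩ = e' ⟨u, hu'⟩ := by congr 1; exact Subtype.ext hau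
            right
            simp [this, he', Fin.val_succ]
        · rw [dif_neg ha, dif_neg hb]
          have : (pathGraph (m + 1)).Adj (e' ⟨a, ha⟩).succ (e' ⟨b, hb⟩).succ ↔
              (pathGraph m).Adj (e' ⟨a, ha⟩) (e' ⟨b, hb⟩) := by
            rw [pathGraph_adj, pathGraph_adj]
            simp only [Fin.val_succ]
            omega
          rw [this, e'.map_rel_iff]
          exact Iff.rfl
      · simp


def TwoNbrs (G : SimpleGraph W) (v : W) : Prop :=
  ∃ a b, a ≠ b ∧ G.Adj v a ∧ G.Adj v b

lemma reachable_induce_of_walk {G : SimpleGraph W} (s : Set W) :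
    ∀ {x y : W} (p : G.Walk x y), (∀ w ∈ p.support, w ∈ s) →
      ∀ (hx : x ∈ s) (hy : y ∈ s), (G.induce s).Reachable ⟨x, hx⟩ ⟨y, hy⟩ := by
  intro x y p
  induction p with
  | nil => intro _ hx hy; exact Reachable.refl _
  | @cons x z y h q ih =>
    intro hsup hx hy
    have hz : z ∈ s := hsup z (by simp [Walk.support_cons])
    have hadj : (G.induce s).Adj ⟨x, hx⟩ ⟨z, hz⟩ := h
    exact hadj.reachable.trans (ih (fun w hw => hsup w (by simp [Walk.support_cons, hw])) hz hy)

lemma uniqueNbr_map {W' : Type*} {G : SimpleGraph W} {G' : SimpleGraph W'} (e : G ≃g G')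
    {v u : W} (h : UniqueNbr G v u) : UniqueNbr G' (e v) (e u) := by
  constructor
  · exact e.map_rel_iff.mpr h.1
  · intro w hw
    have hvw : G.Adj v (e.symm w) := by
      rw [← e.map_rel_iff]; simpa using hw
    have := h.2 hvw
    have : w = e (e.symm w) := by simp
    rw [this, h.2 hvw]

lemma twoNbrs_map {W' : Type*} {G : SimpleGraph W} {G' : SimpleGraph W'} (e : G ≃g G')
    {v : W} (h : TwoNbrs G v) : TwoNbrs G' (e v) := by
  obtain ⟨a, b, hab, ha, hb⟩ := h
  exact ⟨e a, e b, fun hh => hab (e.injective hh), e.map_rel_iff.mpr ha, e.map_rel_iff.mpr hb⟩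

lemma not_twoNbrs_of_unique {G : SimpleGraph W} {v u : W} (h : UniqueNbr G v u) :
    ¬ TwoNbrs G v := by
  rintro ⟨a, b, hab, ha, hb⟩
  exact hab ((h.2 ha).trans (h.2 hb).symm)

lemma path_atMostTwo (n : ℕ) : AtMostTwoNbrs (pathGraph n) := by
  intro v a b c ha hb hc
  rw [pathGraph_adj] at ha hb hc
  simp only [Fin.ext_iff, Fin.val_mk] at *
  omega

lemma path_unique_zero {n : ℕ} (hn : 2 ≤ n) :
    UniqueNbr (pathGraph n) ⟨0, by omega⟩ ⟨1, by omega⟩ := by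
  constructor
  · rw [pathGraph_adj]; left; rfl
  · intro w hw
    rw [pathGraph_adj] at hw
    simp only [Fin.ext_iff, Fin.val_mk] at hw ⊢
    omega

lemma path_unique_last {n : ℕ} (hn : 2 ≤ n) :
    UniqueNbr (pathGraph n) ⟨n - 1, by omega⟩ ⟨n - 2, by omega⟩ := by
  constructor
  · rw [pathGraph_adj]; right; exact show (n-2)+1 = n-1 by omega
  · intro w hw
    rw [pathGraph_adj] at hw
    simp only [Fin.ext_iff, Fin.val_mk] at hw ⊢
    omega

lemma path_middle_two {n : ℕ} (i : Fin n) (h0 : i.val ≠ 0) (h1 : i.val ≠ n - 1) :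
    TwoNbrs (pathGraph n) i := by
  have hn : i.val < n := i.isLt
  refine ⟨⟨i.val - 1, by omega⟩, ⟨i.val + 1, by omega⟩, ?_, ?_, ?_⟩
  · simp only [ne_eq, Fin.ext_iff, Fin.val_mk]; omega
  · rw [pathGraph_adj]; right; exact show (i.val-1)+1 = i.val by omega
  · rw [pathGraph_adj]; left; rfl


lemma fin_sub_val {N : ℕ} (u v : Fin (N + 1)) :
    (u - v).val = if v.val ≤ u.val then u.val - v.val else u.val + (N + 1) - v.val := by
  rw [Fin.sub_def]
  simp only []
  split
  · have h : ((N + 1) - v.val) + u.val = (u.val - v.val) + (N + 1) := by omega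
    rw [h, Nat.add_mod_right, Nat.mod_eq_of_lt (by omega)]
  · have h : ((N + 1) - v.val) + u.val < N + 1 := by omega
    rw [Nat.mod_eq_of_lt h]
    omega

lemma cycle_adj_castSucc {m : ℕ} (hm : 1 ≤ m) (i j : Fin m) :
    (cycleGraph (m + 1)).Adj i.castSucc j.castSucc ↔ (pathGraph m).Adj i j := by
  rw [cycleGraph_adj', pathGraph_adj]
  rw [show ((i.castSucc : Fin (m+1)) = ⟨i.val, by omega⟩) from rfl]
  rw [show ((j.castSucc : Fin (m+1)) = ⟨j.val, by omega⟩) from rfl]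
  obtain ⟨m, rfl⟩ : ∃ k, m = k + 1 := ⟨m - 1, by omega⟩
  rw [fin_sub_val, fin_sub_val]
  have hi := i.isLt
  have hj := j.isLt
  simp only [Fin.val_mk]
  split <;> split <;> omega

lemma cycle_adj_last {m : ℕ} (hm : 2 ≤ m) (i : Fin m) :
    (cycleGraph (m + 1)).Adj (Fin.last m) i.castSucc ↔ (i.val = 0 ∨ i.val = m - 1) := by
  rw [cycleGraph_adj']
  rw [show ((i.castSucc : Fin (m+1)) = ⟨i.val, by omega⟩) from rfl]
  rw [show ((Fin.last m : Fin (m+1)) = ⟨m, by omega⟩) from rfl]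
  obtain ⟨m, rfl⟩ : ∃ k, m = k + 1 := ⟨m - 1, by omega⟩
  rw [fin_sub_val, fin_sub_val]
  have hi := i.isLt
  simp only [Fin.val_mk]
  split <;> split <;> omega


lemma cycle_classify {W : Type u} [Fintype W] (G : SimpleGraph W)
    (hconn : G.Connected) (h2 : AtMostTwoNbrs G) (hall : ∀ v, TwoNbrs G v) :
    3 ≤ Fintype.card W ∧ Nonempty (G ≃g cycleGraph (Fintype.card W)) := by
  classical
  obtain ⟨v0⟩ := hconn.nonempty
  obtain ⟨a, b, hab, hva, hvb⟩ := hall v0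
  have ha' : a ≠ v0 := hva.ne'
  have hb' : b ≠ v0 := hvb.ne'
  have hnbr0 : ∀ ⦃t⦄, G.Adj v0 t → t = a ∨ t = b := by
    intro t ht
    rcases h2 ht hva hvb with h | h | h
    exacts [Or.inl h, absurd h hab, Or.inr h]
  set s : Set W := {z | z ≠ v0} with hs
  have hother : ∀ ⦃p : W⦄, G.Adj v0 p → ∃ c, G.Adj p c ∧ c ≠ v0 ∧
      ∀ ⦃t : W⦄, G.Adj p t → t ≠ v0 → t = c := by
    intro p hp
    obtain ⟨x, y, hxy, hpx, hpy⟩ := hall p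
    have hone : x ≠ v0 ∨ y ≠ v0 := by
      by_contra hc
      push_neg at hc
      exact hxy (hc.1.trans hc.2.symm)
    have key : ∀ c, G.Adj p c → c ≠ v0 → ∃ c', G.Adj p c' ∧ c' ≠ v0 ∧
        ∀ ⦃t : W⦄, G.Adj p t → t ≠ v0 → t = c' := by
      intro c hpc hcv0
      refine ⟨c, hpc, hcv0, fun t hpt htv0 => ?_⟩
      rcases h2 hpt hpc hp.symm with h | h | h
      exacts [h, absurd h hcv0, absurd h htv0]
    rcases hone with h | h
    exacts [key x hpx h, key y hpy h]
  -- Step 1: a and b are joined in G - v0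
  have hreach : (G.induce s).Reachable ⟨a, ha'⟩ ⟨b, hb'⟩ := by
    by_contra hnr
    set S : Set ↥s := {x | (G.induce s).Reachable ⟨a, ha'⟩ x} with hS
    have hSclosed : ∀ ⦃x⦄, x ∈ S → ∀ ⦃y⦄, (G.induce s).Adj x y → y ∈ S :=
      fun x hx y hxy => hx.trans hxy.reachable
    have haS : (⟨a, ha'⟩ : ↥s) ∈ S := Reachable.refl _
    have hbS : (⟨b, hb'⟩ : ↥s) ∉ S := hnr
    obtain ⟨c, hac, hcv0, hcu⟩ := hother hva
    have hcS : (⟨c, hcv0⟩ : ↥s) ∈ S :=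
      hSclosed haS (show (G.induce s).Adj ⟨a, ha'⟩ ⟨c, hcv0⟩ from hac)
    have hconn2 : ((G.induce s).induce S).Connected := by
      rw [connected_iff]
      refine ⟨fun x y => ?_, ⟨⟨_, haS⟩⟩⟩
      obtain ⟨p⟩ := (x.prop : (G.induce s).Reachable _ _).symm.trans y.prop
      refine reachable_induce_of_walk S p (fun w hw => ?_) x.prop y.prop
      exact (x.prop : (G.induce s).Reachable _ _).trans ⟨p.takeUntil w hw⟩
    have h22 : AtMostTwoNbrs ((G.induce s).induce S) :=
      atMostTwo_induce (atMostTwo_induce h2 s) S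
    have hu2 : UniqueNbr ((G.induce s).induce S) ⟨⟨a, ha'⟩, haS⟩ ⟨⟨c, hcv0⟩, hcS⟩ := by
      constructor
      · exact hac
      · rintro ⟨⟨t, htv0⟩, htS⟩ hadj
        exact Subtype.ext (Subtype.ext (hcu (hadj : G.Adj a t) htv0))
    obtain ⟨e, he⟩ := path_classify (Fintype.card ↥S) ((G.induce s).induce S) rfl hconn2 h22 hu2
    have hk2 : 2 ≤ Fintype.card ↥S := by
      refine Fintype.one_lt_card_iff_nontrivial.mpr ⟨⟨_, haS⟩, ⟨_, hcS⟩, ?_⟩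
      intro h
      exact hac.ne (congrArg (fun z => z.val.val) h)
    set z2 := e.symm ⟨Fintype.card ↥S - 1, by omega⟩ with hz2
    have hez2 : (e z2).val = Fintype.card ↥S - 1 := by rw [hz2, RelIso.apply_symm_apply]
    have hz2a : z2 ≠ ⟨⟨a, ha'⟩, haS⟩ := by
      intro h
      rw [h, he] at hez2
      omega
    have hza : z2.val.val ≠ a := by
      intro h
      exact hz2a (Subtype.ext (Subtype.ext h))
    have hzb : z2.val.val ≠ b := by
      intro h
      exact hbS (by rw [show (⟨b, hb'⟩ : ↥s) = z2.val from Subtype.ext h.symm]; exact z2.prop)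
    have hznv : ¬ G.Adj z2.val.val v0 := by
      intro h
      rcases hnbr0 h.symm with h' | h'
      exacts [hza h', hzb h']
    have htwo : TwoNbrs ((G.induce s).induce S) z2 := by
      obtain ⟨x, y, hxy, hzx, hzy⟩ := hall z2.val.val
      have hxv : x ≠ v0 := fun h => hznv (h ▸ hzx)
      have hyv : y ≠ v0 := fun h => hznv (h ▸ hzy)
      have hadjx : (G.induce s).Adj z2.val ⟨x, hxv⟩ := hzx
      have hadjy : (G.induce s).Adj z2.val ⟨y, hyv⟩ := hzy
      have hxS : (⟨x, hxv⟩ : ↥s) ∈ S := hSclosed z2.prop hadjx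
      have hyS : (⟨y, hyv⟩ : ↥s) ∈ S := hSclosed z2.prop hadjy
      refine ⟨⟨⟨x, hxv⟩, hxS⟩, ⟨⟨y, hyv⟩, hyS⟩, ?_, hadjx, hadjy⟩
      intro h
      exact hxy (congrArg (fun z => z.val.val) h)
    have h2n := twoNbrs_map e htwo
    have hEq : e z2 = (⟨Fintype.card ↥S - 1, by omega⟩ : Fin (Fintype.card ↥S)) :=
      Fin.ext hez2
    rw [hEq] at h2n
    exact not_twoNbrs_of_unique (path_unique_last hk2) h2n
  -- Step 2: G - v0 is connected
  have hT : ∀ y : W, y = v0 ∨ ∃ h : y ≠ v0, (G.induce s).Reachable ⟨a, ha'⟩ ⟨y, h⟩ := by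
    intro y
    refine closed_eq_univ hconn.preconnected
      {y | y = v0 ∨ ∃ h : y ≠ v0, (G.induce s).Reachable ⟨a, ha'⟩ ⟨y, h⟩} ?_ (Or.inl rfl) y
    rintro x (rfl | ⟨hx, hrx⟩) y hxy
    · rcases hnbr0 hxy with rfl | rfl
      · exact Or.inr ⟨ha', Reachable.refl _⟩
      · exact Or.inr ⟨hb', hreach⟩
    · by_cases hy : y = v0
      · exact Or.inl hy
      · exact Or.inr ⟨hy, hrx.trans (SimpleGraph.Adj.reachable
          (show (G.induce s).Adj ⟨x, hx⟩ ⟨y, hy⟩ from hxy))⟩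
  have hconn' : (G.induce s).Connected := by
    rw [connected_iff]
    refine ⟨fun x y => ?_, ⟨⟨a, ha'⟩⟩⟩
    rcases hT x.val with h | ⟨hx1, hx2⟩
    · exact absurd h x.prop
    rcases hT y.val with h | ⟨hy1, hy2⟩
    · exact absurd h y.prop
    exact hx2.symm.trans hy2
  -- Step 3: endpoints
  obtain ⟨c, hac, hcv0, hcu⟩ := hother hva
  obtain ⟨d, hbd, hdv0, hdu⟩ := hother hvb
  have hua : UniqueNbr (G.induce s) ⟨a, ha'⟩ ⟨c, hcv0⟩ :=
    ⟨hac, fun t ht => Subtype.ext (hcu (ht : G.Adj a t.val) t.prop)⟩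
  set m := Fintype.card ↥s with hm
  obtain ⟨e, he⟩ := path_classify m (G.induce s) rfl hconn' (atMostTwo_induce h2 s) hua
  have hm2 : 2 ≤ m := by
    refine Fintype.one_lt_card_iff_nontrivial.mpr ⟨⟨a, ha'⟩, ⟨b, hb'⟩, ?_⟩
    intro h
    exact hab (congrArg Subtype.val h)
  have hWcard : Fintype.card W = m + 1 := by
    have h1 : Fintype.card {z : W // ¬ (z = v0)} =
        Fintype.card W - Fintype.card {z : W // z = v0} := Fintype.card_subtype_compl _
    rw [Fintype.card_subtype_eq] at h1
    have h0 : 0 < Fintype.card W := Fintype.card_pos_iff.mpr ⟨v0⟩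
    have : m = Fintype.card W - 1 := h1
    omega
  have hnotb : ¬ TwoNbrs (G.induce s) ⟨b, hb'⟩ := by
    rintro ⟨t1, t2, h12, ht1, ht2⟩
    rcases h2 (ht1 : G.Adj b t1.val) (ht2 : G.Adj b t2.val) hvb.symm with h | h | h
    · exact h12 (Subtype.ext h)
    · exact t2.prop h
    · exact t1.prop h
  have heb : (e ⟨b, hb'⟩).val = m - 1 := by
    have hnb2 : ¬ TwoNbrs (pathGraph m) (e ⟨b, hb'⟩) := by
      intro h
      have := twoNbrs_map e.symm h
      simp only [RelIso.symm_apply_apply] at this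
      exact hnotb this
    by_contra hne
    have h0 : (e ⟨b, hb'⟩).val ≠ 0 := by
      intro h
      have : e ⟨b, hb'⟩ = e ⟨a, ha'⟩ := Fin.ext (h.trans he.symm)
      exact hab (congrArg Subtype.val (e.injective this)).symm
    exact hnb2 (path_middle_two _ h0 hne)
  -- final construction
  rw [hWcard]
  refine ⟨by omega, ⟨⟨⟨fun x => if h : x = v0 then Fin.last m else (e ⟨x, h⟩).castSucc,
    fun i => Fin.lastCases v0 (fun j => (e.symm j).val) i, ?_, ?_⟩, ?_⟩⟩⟩
  · intro x
    by_cases h : x = v0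
    · simp [h]
    · simp [h]
  · intro i
    induction i using Fin.lastCases with
    | last => simp
    | cast j =>
      have hj : ((e.symm j).val : W) ≠ v0 := (e.symm j).prop
      simp [hj]
  · have hmain : ∀ (y : W) (hy : y ≠ v0),
        ((cycleGraph (m + 1)).Adj (Fin.last m) (e ⟨y, hy⟩).castSucc ↔ G.Adj v0 y) := by
      intro y hy
      rw [cycle_adj_last hm2]
      constructor
      · rintro (h | h)
        · have : e ⟨y, hy⟩ = e ⟨a, ha'⟩ := Fin.ext (h.trans he.symm)
          have := congrArg Subtype.val (e.injective this)
          rw [show y = a from this]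
          exact hva
        · have : e ⟨y, hy⟩ = e ⟨b, hb'⟩ := Fin.ext (h.trans heb.symm)
          have := congrArg Subtype.val (e.injective this)
          rw [show y = b from this]
          exact hvb
      · intro h
        rcases hnbr0 h with rfl | rfl
        · left
          rw [show (⟨y, hy⟩ : ↥s) = ⟨y, ha'⟩ from rfl]
          exact he
        · right
          rw [show (⟨y, hy⟩ : ↥s) = ⟨y, hb'⟩ from rfl]
          exact heb
    intro x y
    simp only [Equiv.coe_fn_mk]
    by_cases hx : x = v0 <;> by_cases hy : y = v0
    · subst hx; subst hy
      simp
    · subst hx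
      rw [dif_pos rfl, dif_neg hy]
      exact hmain y hy
    · subst hy
      rw [dif_pos rfl, dif_neg hx]
      rw [(cycleGraph (m + 1)).adj_comm, G.adj_comm]
      exact hmain x hx
    · rw [dif_neg hx, dif_neg hy, cycle_adj_castSucc (by omega), e.map_rel_iff]
      exact Iff.rfl

end Aux

section Aux2
universe u
variable {V : Type u}

def isoOfGraphEq {α : Type*} {G G' : SimpleGraph α} (h : G = G') : G ≃g G' :=
  ⟨Equiv.refl α, by subst h; exact Iff.rfl⟩

lemma path2_eq_star1 : pathGraph 2 = _root_.starGraph 1 := by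
  ext i j
  rw [pathGraph_adj, _root_.starGraph, fromRel_adj]
  revert i j
  decide

def path3_iso_star2 : pathGraph 3 ≃g _root_.starGraph 2 := by
  refine ⟨Equiv.swap 0 1, ?_⟩
  intro a b
  rw [pathGraph_adj, _root_.starGraph, fromRel_adj]
  revert a b
  decide

lemma exists_adj_of_conn {H : SimpleGraph V} [Fintype V] (hconn : H.Connected)
    (hlt : 1 < Fintype.card V) (v : V) : ∃ w, H.Adj v w := by
  obtain ⟨w, hw⟩ := Fintype.exists_ne_of_one_lt_card hlt v
  obtain ⟨p⟩ := hconn.preconnected v w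
  cases p with
  | nil => exact absurd rfl hw
  | cons h q => exact ⟨_, h⟩

lemma free_consequence {H : SimpleGraph V} (hfree : ¬ Contains doubleStarS12 H)
    {a b c d e : V} (hab : H.Adj a b) (hac : H.Adj a c) (hbd : H.Adj b d) (hbe : H.Adj b e)
    (hcb : c ≠ b) (hcd : c ≠ d) (hce : c ≠ e) (hda : d ≠ a) (hea : e ≠ a) (hde : d ≠ e) :
    False := by
  apply hfree
  have hinj : Function.Injective (![a, b, c, d, e] : Fin 5 → V) := by
    intro i j hij
    fin_cases i <;> fin_cases j <;> simp only [Matrix.cons_val_zero, Matrix.cons_val_one,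
      Matrix.head_cons] at hij ⊢ <;>
      first
        | rfl
        | exact absurd hij hab.ne | exact absurd hij hab.ne'
        | exact absurd hij hac.ne | exact absurd hij hac.ne'
        | exact absurd hij hbd.ne | exact absurd hij hbd.ne'
        | exact absurd hij hbe.ne | exact absurd hij hbe.ne'
        | exact absurd hij hcb | exact absurd hij hcb.symm
        | exact absurd hij hcd | exact absurd hij hcd.symm
        | exact absurd hij hce | exact absurd hij hce.symm
        | exact absurd hij hda | exact absurd hij hda.symm
        | exact absurd hij hea | exact absurd hij hea.symm
        | exact absurd hij hde | exact absurd hij hde.symm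
  refine ⟨⟨![a, b, c, d, e], hinj⟩, ?_⟩
  intro i j hij
  rw [doubleStarS12, fromRel_adj] at hij
  simp only [Function.Embedding.coeFn_mk]
  fin_cases i <;> fin_cases j <;>
    simp only [Matrix.cons_val_zero, Matrix.cons_val_one, Matrix.head_cons] <;>
    first
      | exact absurd hij (by decide)
      | exact hab | exact hab.symm | exact hac | exact hac.symm
      | exact hbd | exact hbd.symm | exact hbe | exact hbe.symm

lemma star_case {H : SimpleGraph V} [Fintype V] (v : V)
    (hcov : ∀ y : V, y = v ∨ H.Adj v y)
    (hleaf : ∀ ⦃t⦄, H.Adj v t → ∀ ⦃w⦄, H.Adj t w → w = v)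
    (hx : ∃ x, H.Adj v x) :
    ∃ r, 1 ≤ r ∧ Nonempty (H ≃g _root_.starGraph r) := by
  classical
  obtain ⟨x, hvx⟩ := hx
  have hxv : x ≠ v := hvx.ne'
  set r := Fintype.card V - 1 with hr
  have h0 : 2 ≤ Fintype.card V := Fintype.one_lt_card_iff_nontrivial.mpr ⟨x, v, hxv⟩
  have hcard' : Fintype.card {z : V // ¬ (z = v)} = r := by
    have h1 : Fintype.card {z : V // ¬ (z = v)} =
        Fintype.card V - Fintype.card {z : V // z = v} := Fintype.card_subtype_compl _
    rw [Fintype.card_subtype_eq] at h1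
    omega
  obtain ⟨e⟩ : Nonempty ({z : V // ¬ (z = v)} ≃ Fin r) := ⟨Fintype.equivFinOfCardEq hcard'⟩
  have hstar_adj : ∀ i j : Fin (r + 1), (_root_.starGraph r).Adj i j ↔ (i ≠ j ∧ (i = 0 ∨ j = 0)) := by
    intro i j
    rw [_root_.starGraph, fromRel_adj]
  refine ⟨r, by omega, ⟨⟨⟨fun u => if h : u = v then (0 : Fin (r + 1)) else (e ⟨u, h⟩).succ,
    fun i => Fin.cases v (fun j => (e.symm j).val) i, ?_, ?_⟩, ?_⟩⟩⟩
  · intro u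
    by_cases h : u = v
    · simp [h]
    · simp [h]
  · intro i
    induction i using Fin.cases with
    | zero => simp
    | succ j =>
      have hj : ¬ ((e.symm j).val = v) := (e.symm j).prop
      simp [hj]
  · intro p q
    simp only [Equiv.coe_fn_mk]
    by_cases hp : p = v <;> by_cases hq : q = v
    · rw [dif_pos hp, dif_pos hq, hstar_adj, hp, hq]
      simp
    · rw [dif_pos hp, dif_neg hq, hstar_adj, hp]
      have hvq : H.Adj v q := (hcov q).resolve_left hq
      simp [hvq, (Fin.succ_ne_zero (e ⟨q, hq⟩)).symm]
    · rw [dif_pos hq, dif_neg hp, hstar_adj, hq]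
      have hvp : H.Adj v p := (hcov p).resolve_left hp
      simp [hvp.symm, Fin.succ_ne_zero (e ⟨p, hp⟩)]
    · rw [dif_neg hp, dif_neg hq, hstar_adj]
      have hnot : ¬ H.Adj p q := by
        intro h
        exact hq (hleaf ((hcov p).resolve_left hp) h)
      simp [hnot, Fin.succ_ne_zero, (Fin.succ_ne_zero (e ⟨p, hp⟩)), (Fin.succ_ne_zero (e ⟨q, hq⟩))]

lemma iso_of_four (H : SimpleGraph V) (G4 : SimpleGraph (Fin 4))
    (v t s g : V) (hcov : ∀ u : V, u = v ∨ u = t ∨ u = s ∨ u = g)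
    (hvt : v ≠ t) (hvs : v ≠ s) (hvg : v ≠ g) (hts : t ≠ s) (htg : t ≠ g) (hsg : s ≠ g)
    (hadj : ∀ i j : Fin 4, G4.Adj i j ↔ H.Adj (![v, t, s, g] i) (![v, t, s, g] j)) :
    Nonempty (H ≃g G4) := by
  classical
  have f4 : ∀ u : V, ∃ i : Fin 4, ![v, t, s, g] i = u := by
    intro u
    rcases hcov u with rfl | rfl | rfl | rfl
    exacts [⟨0, rfl⟩, ⟨1, rfl⟩, ⟨2, rfl⟩, ⟨3, rfl⟩]
  have hinj : Function.Injective (![v, t, s, g] : Fin 4 → V) := by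
    intro i j hij
    fin_cases i <;> fin_cases j <;> simp only [Matrix.cons_val_zero, Matrix.cons_val_one,
      Matrix.head_cons] at hij ⊢ <;>
      first
        | rfl
        | exact absurd hij hvt | exact absurd hij hvt.symm
        | exact absurd hij hvs | exact absurd hij hvs.symm
        | exact absurd hij hvg | exact absurd hij hvg.symm
        | exact absurd hij hts | exact absurd hij hts.symm
        | exact absurd hij htg | exact absurd hij htg.symm
        | exact absurd hij hsg | exact absurd hij hsg.symm
  have hbij : Function.Bijective (![v, t, s, g] : Fin 4 → V) :=
    ⟨hinj, fun u => f4 u⟩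
  let E := Equiv.ofBijective _ hbij
  refine ⟨⟨E.symm, ?_⟩⟩
  intro p q
  rw [hadj]
  rw [show (![v, t, s, g] : Fin 4 → V) = ⇑E from rfl, E.apply_symm_apply, E.apply_symm_apply]

end Aux2


theorem stmt5 {V : Type*} [Fintype V] (H : SimpleGraph V)
    (hconn : H.Connected) (hedge : ∃ a b, H.Adj a b)
    (hfree : ¬ Contains doubleStarS12 H) :
    (∃ r, 1 ≤ r ∧ Nonempty (H ≃g _root_.starGraph r)) ∨
    Nonempty (H ≃g K13e) ∨
    Nonempty (H ≃g K4e) ∨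
    Nonempty (H ≃g (⊤ : SimpleGraph (Fin 4))) ∨
    (∃ k, 4 ≤ k ∧ Nonempty (H ≃g SimpleGraph.pathGraph k)) ∨
    (∃ l, 3 ≤ l ∧ Nonempty (H ≃g SimpleGraph.cycleGraph l)) := by
  classical
  by_cases h2 : AtMostTwoNbrs H
  · have hlt : 1 < Fintype.card V := by
      obtain ⟨p, q, hpq⟩ := hedge
      exact Fintype.one_lt_card_iff_nontrivial.mpr ⟨p, q, hpq.ne⟩
    by_cases hleaf : ∃ v0 u, UniqueNbr H v0 u
    · obtain ⟨v0, u, hu⟩ := hleaf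
      obtain ⟨e, -⟩ := path_classify (Fintype.card V) H rfl hconn h2 hu
      rcases show Fintype.card V = 2 ∨ Fintype.card V = 3 ∨ 4 ≤ Fintype.card V by omega
        with hc | hc | hc
      · rw [hc] at e
        exact Or.inl ⟨1, le_refl 1, ⟨e.trans (isoOfGraphEq path2_eq_star1)⟩⟩
      · rw [hc] at e
        exact Or.inl ⟨2, by omega, ⟨e.trans path3_iso_star2⟩⟩
      · exact Or.inr (Or.inr (Or.inr (Or.inr (Or.inl ⟨_, hc, ⟨e⟩⟩))))
    · push_neg at hleaf
      have hall : ∀ v, TwoNbrs H v := by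
        intro v
        obtain ⟨u, hu⟩ := exists_adj_of_conn hconn hlt v
        have hnu := hleaf v u
        rw [UniqueNbr] at hnu
        push_neg at hnu
        obtain ⟨w, hw, hwu⟩ := hnu hu
        exact ⟨w, u, hwu, hw, hu⟩
      obtain ⟨h3, ⟨e⟩⟩ := cycle_classify H hconn h2 hall
      exact Or.inr (Or.inr (Or.inr (Or.inr (Or.inr ⟨_, h3, ⟨e⟩⟩))))
  · rw [AtMostTwoNbrs] at h2
    push_neg at h2
    obtain ⟨v, x, y, z, hvx, hvy, hvz, hxy, hyz, hxz⟩ := h2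
    by_cases hstarc : ∀ ⦃t⦄, H.Adj v t → ∀ ⦃w⦄, H.Adj t w → w = v
    · refine Or.inl (star_case v ?_ hstarc ⟨x, hvx⟩)
      intro u
      refine closed_eq_univ hconn.preconnected {y | y = v ∨ H.Adj v y} ?_ (Or.inl rfl) u
      rintro p hp q hpq
      rcases hp with rfl | hp
      · exact Or.inr hpq
      · exact Or.inl (hstarc hp hpq)
    · push_neg at hstarc
      obtain ⟨t, hvt, s, hts, hsv⟩ := hstarc
      have claimA : ∀ ⦃p q : V⦄, H.Adj v p → H.Adj p q → q ≠ v → H.Adj v q := by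
        intro p q hvp hpq hqv
        by_contra hnadj
        have hqx : q ≠ x := fun h => hnadj (h ▸ hvx)
        have hqy : q ≠ y := fun h => hnadj (h ▸ hvy)
        have hqz : q ≠ z := fun h => hnadj (h ▸ hvz)
        by_cases hpx : p = x
        · exact free_consequence hfree hvp.symm hpq hvy hvz hqv hqy hqz
            (by rw [hpx]; exact hxy.symm) (by rw [hpx]; exact hxz.symm) hyz
        · by_cases hpy : p = y
          · exact free_consequence hfree hvp.symm hpq hvx hvz hqv hqx hqz
              (by rw [hpy]; exact hxy) (by rw [hpy]; exact hyz.symm) hxz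
          · exact free_consequence hfree hvp.symm hpq hvx hvy hqv hqx hqy
              (fun h => hpx h.symm) (fun h => hpy h.symm) hxy
      have hvs : H.Adj v s := claimA hvt hts hsv
      have claimB : ∀ ⦃d e : V⦄, H.Adj v d → H.Adj v e → d ≠ t → d ≠ s → e ≠ t → e ≠ s →
          d = e := by
        intro d e hd he hdt hds het hes
        by_contra hde
        exact free_consequence hfree hvt.symm hts hd he hsv (Ne.symm hds) (Ne.symm hes)
          hdt het hde
      have hg : ∃ g, H.Adj v g ∧ g ≠ t ∧ g ≠ s := by
        by_contra hno
        push_neg at hno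
        by_cases hxt : x = t
        · by_cases hyt : y = t
          · exact hxy (hxt.trans hyt.symm)
          · have hys := hno y hvy hyt
            by_cases hzt : z = t
            · exact hxz (hxt.trans hzt.symm)
            · exact hyz (hys.trans (hno z hvz hzt).symm)
        · have hxs := hno x hvx hxt
          by_cases hyt : y = t
          · by_cases hzt : z = t
            · exact hyz (hyt.trans hzt.symm)
            · exact hxz (hxs.trans (hno z hvz hzt).symm)
          · exact hxy (hxs.trans (hno y hvy hyt).symm)
      obtain ⟨g, hvg, hgt, hgs⟩ := hg
      have hnbrv : ∀ ⦃w⦄, H.Adj v w → w = t ∨ w = s ∨ w = g := by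
        intro w hw
        by_cases h1 : w = t
        · exact Or.inl h1
        by_cases h2' : w = s
        · exact Or.inr (Or.inl h2')
        · exact Or.inr (Or.inr (claimB hw hvg h1 h2' hgt hgs))
      have hcov : ∀ u : V, u = v ∨ u = t ∨ u = s ∨ u = g := by
        intro u
        refine closed_eq_univ hconn.preconnected {u | u = v ∨ u = t ∨ u = s ∨ u = g} ?_
          (Or.inl rfl) u
        rintro p hp q hpq
        by_cases hqv : q = v
        · exact Or.inl hqv
        rcases hp with rfl | rfl | rfl | rfl
        · exact Or.inr (hnbrv hpq)
        · exact Or.inr (hnbrv (claimA hvt hpq hqv))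
        · exact Or.inr (hnbrv (claimA hvs hpq hqv))
        · exact Or.inr (hnbrv (claimA hvg hpq hqv))
      have hvt' : v ≠ t := hvt.ne
      have hvs' : v ≠ s := hvs.ne
      have hvg' : v ≠ g := hvg.ne
      have hts' : t ≠ s := hts.ne
      have hLv : ¬ H.Adj v v := H.loopless.irrefl v
      have hLt : ¬ H.Adj t t := H.loopless.irrefl t
      have hLs : ¬ H.Adj s s := H.loopless.irrefl s
      have hLg : ¬ H.Adj g g := H.loopless.irrefl g
      by_cases htg2 : H.Adj t g <;> by_cases hsg2 : H.Adj s g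
      · -- K4
        refine Or.inr (Or.inr (Or.inr (Or.inl ?_)))
        refine iso_of_four H ⊤ v t s g hcov hvt' hvs' hvg' hts' (Ne.symm hgt) (Ne.symm hgs) ?_
        intro i j
        fin_cases i <;> fin_cases j <;>
          first
          | exact iff_of_false (by simp) hLv
          | exact iff_of_false (by simp) hLt
          | exact iff_of_false (by simp) hLs
          | exact iff_of_false (by simp) hLg
          | exact iff_of_true (by simp) hvt
          | exact iff_of_true (by simp) hvt.symm
          | exact iff_of_true (by simp) hvs
          | exact iff_of_true (by simp) hvs.symm
          | exact iff_of_true (by simp) hvg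
          | exact iff_of_true (by simp) hvg.symm
          | exact iff_of_true (by simp) hts
          | exact iff_of_true (by simp) hts.symm
          | exact iff_of_true (by simp) htg2
          | exact iff_of_true (by simp) htg2.symm
          | exact iff_of_true (by simp) hsg2
          | exact iff_of_true (by simp) hsg2.symm
      · -- K4 - e, missing edge s-g, map v t s g
        refine Or.inr (Or.inr (Or.inl ?_))
        refine iso_of_four H K4e v t s g hcov hvt' hvs' hvg' hts' (Ne.symm hgt) (Ne.symm hgs) ?_
        intro i j
        fin_cases i <;> fin_cases j <;>
          first
          | exact iff_of_false (by rw [K4e, fromRel_adj]; decide) hLv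
          | exact iff_of_false (by rw [K4e, fromRel_adj]; decide) hLt
          | exact iff_of_false (by rw [K4e, fromRel_adj]; decide) hLs
          | exact iff_of_false (by rw [K4e, fromRel_adj]; decide) hLg
          | exact iff_of_false (by rw [K4e, fromRel_adj]; decide) hsg2
          | exact iff_of_false (by rw [K4e, fromRel_adj]; decide) (fun h => hsg2 h.symm)
          | exact iff_of_true (by rw [K4e, fromRel_adj]; decide) hvt
          | exact iff_of_true (by rw [K4e, fromRel_adj]; decide) hvt.symm
          | exact iff_of_true (by rw [K4e, fromRel_adj]; decide) hvs
          | exact iff_of_true (by rw [K4e, fromRel_adj]; decide) hvs.symm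
          | exact iff_of_true (by rw [K4e, fromRel_adj]; decide) hvg
          | exact iff_of_true (by rw [K4e, fromRel_adj]; decide) hvg.symm
          | exact iff_of_true (by rw [K4e, fromRel_adj]; decide) hts
          | exact iff_of_true (by rw [K4e, fromRel_adj]; decide) hts.symm
          | exact iff_of_true (by rw [K4e, fromRel_adj]; decide) htg2
          | exact iff_of_true (by rw [K4e, fromRel_adj]; decide) htg2.symm
      · -- K4 - e, missing edge t-g, map v s t g
        refine Or.inr (Or.inr (Or.inl ?_))
        have hcov' : ∀ u : V, u = v ∨ u = s ∨ u = t ∨ u = g := by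
          intro u
          rcases hcov u with h | h | h | h
          exacts [Or.inl h, Or.inr (Or.inr (Or.inl h)), Or.inr (Or.inl h),
            Or.inr (Or.inr (Or.inr h))]
        refine iso_of_four H K4e v s t g hcov' hvs' hvt' hvg' (Ne.symm hts')
          (Ne.symm hgs) (Ne.symm hgt) ?_
        intro i j
        fin_cases i <;> fin_cases j <;>
          first
          | exact iff_of_false (by rw [K4e, fromRel_adj]; decide) hLv
          | exact iff_of_false (by rw [K4e, fromRel_adj]; decide) hLt
          | exact iff_of_false (by rw [K4e, fromRel_adj]; decide) hLs
          | exact iff_of_false (by rw [K4e, fromRel_adj]; decide) hLg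
          | exact iff_of_false (by rw [K4e, fromRel_adj]; decide) htg2
          | exact iff_of_false (by rw [K4e, fromRel_adj]; decide) (fun h => htg2 h.symm)
          | exact iff_of_true (by rw [K4e, fromRel_adj]; decide) hvt
          | exact iff_of_true (by rw [K4e, fromRel_adj]; decide) hvt.symm
          | exact iff_of_true (by rw [K4e, fromRel_adj]; decide) hvs
          | exact iff_of_true (by rw [K4e, fromRel_adj]; decide) hvs.symm
          | exact iff_of_true (by rw [K4e, fromRel_adj]; decide) hvg
          | exact iff_of_true (by rw [K4e, fromRel_adj]; decide) hvg.symm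
          | exact iff_of_true (by rw [K4e, fromRel_adj]; decide) hts
          | exact iff_of_true (by rw [K4e, fromRel_adj]; decide) hts.symm
          | exact iff_of_true (by rw [K4e, fromRel_adj]; decide) hsg2
          | exact iff_of_true (by rw [K4e, fromRel_adj]; decide) hsg2.symm
      · -- K13e, map v t s g (edge between leaves is t-s = 1-2)
        refine Or.inr (Or.inl ?_)
        refine iso_of_four H K13e v t s g hcov hvt' hvs' hvg' hts' (Ne.symm hgt)
          (Ne.symm hgs) ?_
        intro i j
        fin_cases i <;> fin_cases j <;>
          first
          | exact iff_of_false (by rw [K13e, fromRel_adj]; decide) hLv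
          | exact iff_of_false (by rw [K13e, fromRel_adj]; decide) hLt
          | exact iff_of_false (by rw [K13e, fromRel_adj]; decide) hLs
          | exact iff_of_false (by rw [K13e, fromRel_adj]; decide) hLg
          | exact iff_of_false (by rw [K13e, fromRel_adj]; decide) htg2
          | exact iff_of_false (by rw [K13e, fromRel_adj]; decide) (fun h => htg2 h.symm)
          | exact iff_of_false (by rw [K13e, fromRel_adj]; decide) hsg2
          | exact iff_of_false (by rw [K13e, fromRel_adj]; decide) (fun h => hsg2 h.symm)
          | exact iff_of_true (by rw [K13e, fromRel_adj]; decide) hvt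
          | exact iff_of_true (by rw [K13e, fromRel_adj]; decide) hvt.symm
          | exact iff_of_true (by rw [K13e, fromRel_adj]; decide) hvs
          | exact iff_of_true (by rw [K13e, fromRel_adj]; decide) hvs.symm
          | exact iff_of_true (by rw [K13e, fromRel_adj]; decide) hvg
          | exact iff_of_true (by rw [K13e, fromRel_adj]; decide) hvg.symm
          | exact iff_of_true (by rw [K13e, fromRel_adj]; decide) hts
          | exact iff_of_true (by rw [K13e, fromRel_adj]; decide) hts.symm
end

section
/- Let G be a θ_{2,2,3}-free graph, u* a vertex of G, U = N(u*), and W = V(G) \ N[u*]. Let H be a connected component of the induced subgraph G[U] that contains a cycle of length at least four. Then every vertex w ∈ W having at least one neighbor in V(H) satisfies d_U(w) ≤ 2, i.e., w has at most two neighbors in U. -/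
open SimpleGraph

lemma contains_theta223 {V : Type*} (G : SimpleGraph V) {a b c₁ c₂ d₁ d₂ : V}
    (h12 : a ≠ b) (h13 : a ≠ c₁) (h14 : a ≠ c₂) (h15 : a ≠ d₁) (h16 : a ≠ d₂)
    (h23 : b ≠ c₁) (h24 : b ≠ c₂) (h25 : b ≠ d₁) (h26 : b ≠ d₂)
    (h34 : c₁ ≠ c₂) (h35 : c₁ ≠ d₁) (h36 : c₁ ≠ d₂)
    (h45 : c₂ ≠ d₁) (h46 : c₂ ≠ d₂) (h56 : d₁ ≠ d₂)
    (e1 : G.Adj a c₁) (e2 : G.Adj c₁ b) (e3 : G.Adj a c₂) (e4 : G.Adj c₂ b)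
    (e5 : G.Adj a d₁) (e6 : G.Adj d₁ d₂) (e7 : G.Adj d₂ b) :
    Contains theta223 G := by
  refine ⟨⟨fun i => if i = 0 then a else if i = 1 then b else if i = 2 then c₁
      else if i = 3 then c₂ else if i = 4 then d₁ else d₂, ?_⟩, ?_⟩
  · intro i j hij
    fin_cases i <;> fin_cases j <;> simp_all
  · intro i j hij
    fin_cases i <;> fin_cases j <;>
      simp only [theta223, SimpleGraph.fromRel_adj] at hij <;>
      simp_all <;>
      first
        | exact e1 | exact e1.symm | exact e2 | exact e2.symm
        | exact e3 | exact e3.symm | exact e4 | exact e4.symm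
        | exact e5 | exact e5.symm | exact e6 | exact e6.symm
        | exact e7 | exact e7.symm

theorem stmt6 {V : Type*} [Fintype V] (G : SimpleGraph V)
    (hfree : ¬ Contains theta223 G) (ustar : V)
    (c : (G.induce (G.neighborSet ustar)).ConnectedComponent)
    (hcyc : ∃ (v : G.neighborSet ustar)
        (p : (G.induce (G.neighborSet ustar)).Walk v v),
        p.IsCycle ∧ 4 ≤ p.length ∧
        (G.induce (G.neighborSet ustar)).connectedComponentMk v = c)
    (w : V) (hw₁ : w ≠ ustar) (hw₂ : ¬ G.Adj ustar w)
    (hwH : ∃ u : G.neighborSet ustar, u ∈ c.supp ∧ G.Adj w (u : V)) :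
    (G.neighborSet w ∩ G.neighborSet ustar).ncard ≤ 2 := by
  classical
  by_contra hcard
  push_neg at hcard
  apply hfree
  have hwU : ∀ x : V, G.Adj ustar x → w ≠ x := fun x hx h => hw₂ (h ▸ hx)
  by_cases hP : ∃ x y : V, G.Adj ustar x ∧ ¬ G.Adj w x ∧ G.Adj ustar y ∧ G.Adj w y ∧ G.Adj x y
  · obtain ⟨x, y, hux, hwx, huy, hwy, hxy⟩ := hP
    have hyN : y ∈ G.neighborSet w ∩ G.neighborSet ustar := ⟨hwy, huy⟩
    have h2 : 1 < ((G.neighborSet w ∩ G.neighborSet ustar) \ {y}).ncard := by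
      rw [Set.ncard_diff_singleton_of_mem hyN]
      omega
    obtain ⟨c₁, hc₁, c₂, hc₂, hne⟩ := (Set.one_lt_ncard (Set.toFinite _)).mp h2
    obtain ⟨⟨hwc₁, huc₁⟩, hc₁y⟩ := hc₁
    obtain ⟨⟨hwc₂, huc₂⟩, hc₂y⟩ := hc₂
    simp only [Set.mem_singleton_iff] at hc₁y hc₂y
    have hwc₁' : G.Adj w c₁ := hwc₁
    have hwc₂' : G.Adj w c₂ := hwc₂
    exact contains_theta223 G (Ne.symm hw₁) huc₁.ne huc₂.ne hux.ne huy.ne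
      (hwU c₁ huc₁) (hwU c₂ huc₂) (hwU x hux) (hwU y huy)
      hne (by rintro rfl; exact hwx hwc₁') hc₁y
      (by rintro rfl; exact hwx hwc₂') hc₂y
      (by rintro rfl; exact hwx hwy)
      huc₁ hwc₁'.symm huc₂ hwc₂'.symm hux hxy hwy.symm
  · push_neg at hP
    have key : ∀ x y : V, G.Adj ustar x → G.Adj ustar y → G.Adj w y → G.Adj x y →
        G.Adj w x := by
      intro x y h1 h2 h3 h4
      by_contra hn
      exact hP x y h1 hn h2 h3 h4
    obtain ⟨u, huc, hwu⟩ := hwH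
    -- every vertex of the component c is adjacent to w
    have key2 : ∀ (a b : G.neighborSet ustar)
        (p : (G.induce (G.neighborSet ustar)).Walk a b), G.Adj w ↑a → G.Adj w ↑b := by
      intro a b p
      induction p with
      | nil => exact id
      | @cons a m b h q ih =>
        intro ha
        have hadj : G.Adj ↑a ↑m := h
        exact ih (key ↑m ↑a m.2 a.2 ha hadj.symm)
    have claim : ∀ z : G.neighborSet ustar, z ∈ c.supp → G.Adj w ↑z := by
      intro z hz
      rw [ConnectedComponent.mem_supp_iff] at hz huc
      obtain ⟨p⟩ := (ConnectedComponent.eq).mp (huc.trans hz.symm)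
      exact key2 u z p hwu
    obtain ⟨v, p, hpc, hplen, hvc⟩ := hcyc
    cases p with
    | nil => simp at hplen
    | @cons _ x₁ _ h₁ q₁ =>
      cases q₁ with
      | nil => simp at hplen
      | @cons _ x₂ _ h₂ q₂ =>
        cases q₂ with
        | nil => simp at hplen
        | @cons _ x₃ _ h₃ q₃ =>
          cases q₃ with
          | nil => simp at hplen
          | @cons _ x₄ _ h₄ q₄ =>
            have hnd := hpc.support_nodup
            simp only [Walk.support_cons, List.tail_cons, List.nodup_cons,
              List.mem_cons, not_or] at hnd
            have hvq : v ∈ q₄.support := q₄.end_mem_support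
            have hx₁x₂ : x₁ ≠ x₂ := hnd.1.1
            have hx₁x₃ : x₁ ≠ x₃ := hnd.1.2.1
            have hx₂x₃ : x₂ ≠ x₃ := hnd.2.1.1
            have hx₁v : x₁ ≠ v := fun h => hnd.1.2.2 (h ▸ hvq)
            have hx₂v : x₂ ≠ v := fun h => hnd.2.1.2 (h ▸ hvq)
            have hx₃v : x₃ ≠ v := fun h => hnd.2.2.1 (h ▸ hvq)
            -- components
            have hmk : ∀ z : G.neighborSet ustar,
                (G.induce (G.neighborSet ustar)).Reachable v z → z ∈ c.supp := by
              intro z hr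
              rw [ConnectedComponent.mem_supp_iff, ← hvc]
              exact (ConnectedComponent.sound hr).symm
            have wv : G.Adj w ↑v := claim v (hmk v (Reachable.refl v))
            have wx₁ : G.Adj w ↑x₁ := claim x₁ (hmk x₁ h₁.reachable)
            have wx₂ : G.Adj w ↑x₂ := claim x₂ (hmk x₂ (h₁.reachable.trans h₂.reachable))
            have wx₃ : G.Adj w ↑x₃ :=
              claim x₃ (hmk x₃ ((h₁.reachable.trans h₂.reachable).trans h₃.reachable))
            have gvx₁ : G.Adj ↑v ↑x₁ := h₁
            exact contains_theta223 G (Ne.symm hw₁)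
              (Adj.ne x₂.2) (Adj.ne x₃.2) (Adj.ne x₁.2) (Adj.ne v.2)
              (hwU ↑x₂ x₂.2) (hwU ↑x₃ x₃.2) (hwU ↑x₁ x₁.2) (hwU ↑v v.2)
              (fun h => hx₂x₃ (Subtype.coe_injective h))
              (fun h => hx₁x₂ (Subtype.coe_injective h).symm)
              (fun h => hx₂v (Subtype.coe_injective h))
              (fun h => hx₁x₃ (Subtype.coe_injective h).symm)
              (fun h => hx₃v (Subtype.coe_injective h))
              (fun h => hx₁v (Subtype.coe_injective h))
              x₂.2 wx₂.symm x₃.2 wx₃.symm x₁.2 gvx₁.symm wv.symm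
end

section
/- Let G be a θ_{2,2,3}-free graph, u* a vertex of G, U = N(u*), and W = V(G) \ N[u*]. Suppose w₁, w₂ ∈ W are adjacent in G and each of w₁ and w₂ has at least one neighbor in U. Then d_U(w₁) + d_U(w₂) ≤ 4, where d_U(w) is the number of neighbors of w in U. -/
open SimpleGraph

set_option linter.unreachableTactic false
set_option linter.unusedTactic false

lemma aux13 {V : Type*} [Fintype V] (G : SimpleGraph V)
    (hfree : ¬ Contains theta223 G) (ustar w₁ w₂ : V)
    (hw₁ : w₁ ≠ ustar) (hw₁' : ¬ G.Adj ustar w₁)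
    (hw₂ : w₂ ≠ ustar) (hw₂' : ¬ G.Adj ustar w₂)
    (hadj : G.Adj w₁ w₂)
    (hn₂ : ∃ u, G.Adj ustar u ∧ G.Adj w₂ u) :
    (G.neighborSet w₁ ∩ G.neighborSet ustar).ncard ≤ 2 := by
  by_contra h
  push_neg at h
  obtain ⟨u, hu, hu2⟩ := hn₂
  set A := G.neighborSet w₁ ∩ G.neighborSet ustar with hA
  have hsub : A ⊆ (A \ {u}) ∪ {u} := fun x hx => by
    by_cases hxu : x = u
    · exact Or.inr (by simp [hxu])
    · exact Or.inl ⟨hx, hxu⟩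
  have hle : A.ncard ≤ (A \ {u}).ncard + 1 := by
    calc A.ncard ≤ ((A \ {u}) ∪ {u}).ncard := Set.ncard_le_ncard hsub (Set.toFinite _)
    _ ≤ (A \ {u}).ncard + ({u} : Set V).ncard := Set.ncard_union_le _ _
    _ = (A \ {u}).ncard + 1 := by rw [Set.ncard_singleton]
  have h2 : 1 < (A \ {u}).ncard := by omega
  obtain ⟨c₁, c₂, hc₁, hc₂, hcc⟩ := (Set.one_lt_ncard_iff (Set.toFinite _)).mp h2
  obtain ⟨⟨hc₁m, hc₁ne⟩, ⟨hc₂m, hc₂ne⟩⟩ := And.intro hc₁ hc₂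
  rw [hA] at hc₁m hc₂m
  obtain ⟨hc₁w, hc₁u⟩ := hc₁m
  obtain ⟨hc₂w, hc₂u⟩ := hc₂m
  rw [SimpleGraph.mem_neighborSet] at hc₁w hc₁u hc₂w hc₂u
  rw [Set.mem_singleton_iff] at hc₁ne hc₂ne
  have n1 : ustar ≠ c₁ := hc₁u.ne
  have n2 : ustar ≠ c₂ := hc₂u.ne
  have n3 : ustar ≠ u := hu.ne
  have n4 : w₁ ≠ c₁ := hc₁w.ne
  have n5 : w₁ ≠ c₂ := hc₂w.ne
  have n6 : w₁ ≠ u := fun e => hw₁' (e ▸ hu)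
  have n7 : w₁ ≠ w₂ := hadj.ne
  have n8 : c₁ ≠ w₂ := fun e => hw₂' (e ▸ hc₁u)
  have n9 : c₂ ≠ w₂ := fun e => hw₂' (e ▸ hc₂u)
  have n10 : u ≠ w₂ := hu2.ne'
  have m1 : u ≠ c₁ := fun e => hc₁ne e.symm
  have m2 : u ≠ c₂ := fun e => hc₂ne e.symm
  apply hfree
  refine ⟨⟨![ustar, w₁, c₁, c₂, u, w₂], ?_⟩, ?_⟩
  · intro a b hab
    fin_cases a <;> fin_cases b <;>
      first
        | rfl
        | exact absurd hab hw₁ | exact absurd hab hw₁.symm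
        | exact absurd hab hw₂ | exact absurd hab hw₂.symm
        | exact absurd hab hcc | exact absurd hab hcc.symm
        | exact absurd hab hc₁ne | exact absurd hab hc₁ne.symm
        | exact absurd hab hc₂ne | exact absurd hab hc₂ne.symm
        | exact absurd hab n1 | exact absurd hab n1.symm
        | exact absurd hab n2 | exact absurd hab n2.symm
        | exact absurd hab n3 | exact absurd hab n3.symm
        | exact absurd hab n4 | exact absurd hab n4.symm
        | exact absurd hab n5 | exact absurd hab n5.symm
        | exact absurd hab n6 | exact absurd hab n6.symm
        | exact absurd hab n7 | exact absurd hab n7.symm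
        | exact absurd hab n8 | exact absurd hab n8.symm
        | exact absurd hab n9 | exact absurd hab n9.symm
        | exact absurd hab n10 | exact absurd hab n10.symm
        | exact absurd hab m1 | exact absurd hab m1.symm
        | exact absurd hab m2 | exact absurd hab m2.symm
  · intro a b hab
    rw [theta223, SimpleGraph.fromRel_adj] at hab
    fin_cases a <;> fin_cases b <;>
      first
        | exact absurd hab (by decide)
        | exact hc₁u | exact hc₂u | exact hu
        | exact hc₁u.symm | exact hc₂u.symm | exact hu.symm
        | exact hc₁w | exact hc₂w | exact hu2 | exact hadj
        | exact hc₁w.symm | exact hc₂w.symm | exact hu2.symm | exact hadj.symm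

theorem stmt13 {V : Type*} [Fintype V] (G : SimpleGraph V)
    (hfree : ¬ Contains theta223 G) (ustar : V)
    (w₁ w₂ : V)
    (hw₁ : w₁ ≠ ustar) (hw₁' : ¬ G.Adj ustar w₁)
    (hw₂ : w₂ ≠ ustar) (hw₂' : ¬ G.Adj ustar w₂)
    (hadj : G.Adj w₁ w₂)
    (hn₁ : ∃ u, G.Adj ustar u ∧ G.Adj w₁ u)
    (hn₂ : ∃ u, G.Adj ustar u ∧ G.Adj w₂ u) :
    (G.neighborSet w₁ ∩ G.neighborSet ustar).ncard +
      (G.neighborSet w₂ ∩ G.neighborSet ustar).ncard ≤ 4 := by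
  have h1 := aux13 G hfree ustar w₁ w₂ hw₁ hw₁' hw₂ hw₂' hadj hn₂
  have h2 := aux13 G hfree ustar w₂ w₁ hw₂ hw₂' hw₁ hw₁' hadj.symm hn₁
  omega
end

section
/- Let G be a θ_{2,2,3}-free graph, u* a vertex of G, U = N(u*), and W = V(G) \ N[u*]. Let H be a connected component of the induced subgraph G[U] isomorphic to K_{1,3}+e. Then every vertex w ∈ W having at least one neighbor in V(H) satisfies d_U(w) ≤ 2, i.e., w has at most two neighbors in U. -/
open SimpleGraph

lemma key {V : Type*} (G : SimpleGraph V) (ustar w x y d1 d2 : V)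
    (hxU : G.Adj ustar x) (hyU : G.Adj ustar y) (hd1U : G.Adj ustar d1)
    (hwx : G.Adj w x) (hwy : G.Adj w y) (hwd2 : G.Adj w d2) (hd : G.Adj d1 d2)
    (hxy : x ≠ y) (hxd1 : x ≠ d1) (hxd2 : x ≠ d2) (hyd1 : y ≠ d1) (hyd2 : y ≠ d2)
    (hd12 : d1 ≠ d2) (huw : ¬ G.Adj ustar w) (hne : w ≠ ustar) :
    Contains theta223 G := by
  have hux : ustar ≠ x := hxU.ne
  have huy : ustar ≠ y := hyU.ne
  have hud1 : ustar ≠ d1 := hd1U.ne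
  have hud2 : ustar ≠ d2 := fun h => huw (h ▸ hwd2.symm)
  have hwxne : w ≠ x := hwx.ne
  have hwyne : w ≠ y := hwy.ne
  have hwd2ne : w ≠ d2 := hwd2.ne
  have hwd1 : w ≠ d1 := fun h => huw (h ▸ hd1U)
  refine ⟨⟨fun i => if i = 0 then ustar else if i = 1 then w else if i = 2 then x
      else if i = 3 then y else if i = 4 then d1 else d2, ?_⟩, ?_⟩
  · intro a b hab
    have := hne.symm; have := hux.symm; have := huy.symm; have := hud1.symm
    have := hud2.symm; have := hwxne.symm; have := hwyne.symm; have := hwd2ne.symm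
    have := hwd1.symm; have := hxy.symm; have := hxd1.symm; have := hxd2.symm
    have := hyd1.symm; have := hyd2.symm; have := hd12.symm
    fin_cases a <;> fin_cases b <;> simp_all
  · intro a b hab
    show G.Adj ((fun i : Fin 6 => if i = 0 then ustar else if i = 1 then w else if i = 2 then x
      else if i = 3 then y else if i = 4 then d1 else d2) a) ((fun i : Fin 6 => if i = 0 then ustar
      else if i = 1 then w else if i = 2 then x else if i = 3 then y else if i = 4 then d1 else d2) b)
    have := hxU.symm; have := hyU.symm; have := hd1U.symm
    have := hwx.symm; have := hwy.symm; have := hwd2.symm; have := hd.symm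
    fin_cases a <;> fin_cases b <;> simp_all [theta223]

theorem stmt14 {V : Type*} [Fintype V] (G : SimpleGraph V)
    (hfree : ¬ Contains theta223 G) (ustar : V)
    (c : (G.induce (G.neighborSet ustar)).ConnectedComponent)
    (hiso : Nonempty (((G.induce (G.neighborSet ustar)).induce c.supp) ≃g K13e))
    (w : V) (hw₁ : w ≠ ustar) (hw₂ : ¬ G.Adj ustar w)
    (hwH : ∃ u : G.neighborSet ustar, u ∈ c.supp ∧ G.Adj w (u : V)) :
    (G.neighborSet w ∩ G.neighborSet ustar).ncard ≤ 2 := by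
  classical
  by_contra hcon
  push_neg at hcon
  obtain ⟨e⟩ := hiso
  set S : Set V := G.neighborSet w ∩ G.neighborSet ustar with hSdef
  have hSfin : S.Finite := Set.toFinite _
  have hSmem : ∀ z, z ∈ S ↔ G.Adj w z ∧ G.Adj ustar z := by
    intro z; simp [hSdef, Set.mem_inter_iff, mem_neighborSet]
  let h : Fin 4 → V := fun i => ((e.symm i : c.supp) : G.neighborSet ustar)
  have hU : ∀ i, G.Adj ustar (h i) := fun i => ((e.symm i : c.supp) : G.neighborSet ustar).2
  have hinj : ∀ i j : Fin 4, i ≠ j → h i ≠ h j := by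
    intro i j hij heq
    exact hij (e.symm.injective (Subtype.ext (Subtype.ext heq)))
  have hAdj : ∀ i j, K13e.Adj i j → G.Adj (h i) (h j) := by
    intro i j hij
    have h2 : ((G.induce (G.neighborSet ustar)).induce c.supp).Adj (e.symm i) (e.symm j) :=
      e.symm.map_adj_iff.mpr hij
    simp [comap_adj] at h2; exact h2
  have hK : ∀ i : Fin 4, i ≠ 0 → K13e.Adj 0 i := by
    intro i hi
    rw [K13e, SimpleGraph.fromRel_adj]
    exact ⟨Ne.symm hi, Or.inl (Or.inl rfl)⟩
  have pick2 : ∀ z : V, ∃ p q, p ∈ S ∧ q ∈ S ∧ p ≠ q ∧ p ≠ z ∧ q ≠ z := by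
    obtain ⟨a, b, c', ha, hb, hc, hab, hac, hbc⟩ := (Set.two_lt_ncard_iff hSfin).mp hcon
    intro z
    by_cases haz : a = z
    · exact ⟨b, c', hb, hc, hbc, fun hh => hab (haz ▸ hh.symm ▸ rfl), fun hh => hac (haz ▸ hh.symm ▸ rfl)⟩
    · by_cases hbz : b = z
      · exact ⟨a, c', ha, hc, hac, haz, fun hh => hbc (hbz ▸ hh.symm ▸ rfl)⟩
      · exact ⟨a, b, ha, hb, hab, haz, hbz⟩
  obtain ⟨u, hu, hwu⟩ := hwH
  set i0 : Fin 4 := e ⟨u, hu⟩ with hi0def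
  have hhi0 : h i0 = u := by
    show ((e.symm (e ⟨u, hu⟩) : c.supp) : G.neighborSet ustar).1 = u
    rw [e.symm_apply_apply]
  have hwi0 : G.Adj w (h i0) := hhi0 ▸ hwu
  by_cases h0w : G.Adj w (h 0)
  · by_cases hall : G.Adj w (h 1) ∧ G.Adj w (h 2) ∧ G.Adj w (h 3)
    · exact hfree (key G ustar w (h 2) (h 3) (h 1) (h 0)
        (hU 2) (hU 3) (hU 1) hall.2.1 hall.2.2 h0w
        ((hAdj 0 1 (hK 1 (by decide))).symm)
        (hinj 2 3 (by decide)) (hinj 2 1 (by decide)) (hinj 2 0 (by decide))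
        (hinj 3 1 (by decide)) (hinj 3 0 (by decide)) (hinj 1 0 (by decide)) hw₂ hw₁)
    · have : ∃ j : Fin 4, j ≠ 0 ∧ ¬ G.Adj w (h j) := by
        by_contra hc2
        push_neg at hc2
        exact hall ⟨hc2 1 (by decide), hc2 2 (by decide), hc2 3 (by decide)⟩
      obtain ⟨j, hj0, hjw⟩ := this
      obtain ⟨p, q, hp, hq, hpq, hp0, hq0⟩ := pick2 (h 0)
      have hpS := (hSmem p).mp hp
      have hqS := (hSmem q).mp hq
      have hpj : p ≠ h j := fun hh => hjw (hh ▸ hpS.1)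
      have hqj : q ≠ h j := fun hh => hjw (hh ▸ hqS.1)
      exact hfree (key G ustar w p q (h j) (h 0)
        hpS.2 hqS.2 (hU j) hpS.1 hqS.1 h0w
        ((hAdj 0 j (hK j hj0)).symm)
        hpq hpj hp0 hqj hq0 (hinj j 0 hj0) hw₂ hw₁)
  · have hi00 : i0 ≠ 0 := fun hh => h0w (hh ▸ hwi0)
    obtain ⟨p, q, hp, hq, hpq, hpi, hqi⟩ := pick2 (h i0)
    have hpS := (hSmem p).mp hp
    have hqS := (hSmem q).mp hq
    have hp0 : p ≠ h 0 := fun hh => h0w (hh ▸ hpS.1)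
    have hq0 : q ≠ h 0 := fun hh => h0w (hh ▸ hqS.1)
    exact hfree (key G ustar w p q (h 0) (h i0)
      hpS.2 hqS.2 (hU 0) hpS.1 hqS.1 hwi0
      (hAdj 0 i0 (hK i0 hi00))
      hpq hp0 hpi hq0 hqi (hinj 0 i0 (Ne.symm hi00)) hw₂ hw₁)
end

section
/- Let G be a θ_{2,2,3}-free graph, u* a vertex of G, U = N(u*), and W = V(G) \ N[u*]. Let H be a connected component of the induced subgraph G[U] isomorphic to the triangle C₃. Then every vertex w ∈ W having at least one neighbor in V(H) satisfies d_U(w) ≤ 3, i.e., w has at most three neighbors in U. -/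
open SimpleGraph

theorem stmt15 {V : Type*} [Fintype V] (G : SimpleGraph V)
    (hfree : ¬ Contains theta223 G) (ustar : V)
    (c : (G.induce (G.neighborSet ustar)).ConnectedComponent)
    (hiso : Nonempty (((G.induce (G.neighborSet ustar)).induce c.supp) ≃g
      SimpleGraph.cycleGraph 3))
    (w : V) (hw₁ : w ≠ ustar) (hw₂ : ¬ G.Adj ustar w)
    (hwH : ∃ u : G.neighborSet ustar, u ∈ c.supp ∧ G.Adj w (u : V)) :
    (G.neighborSet w ∩ G.neighborSet ustar).ncard ≤ 3 := by
  obtain ⟨a, b, cc, haU, hbU, hcU, hab, hac, hbc, hGab, hGac, hwa⟩ :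
      ∃ a b cc : V, a ∈ G.neighborSet ustar ∧ b ∈ G.neighborSet ustar ∧
        cc ∈ G.neighborSet ustar ∧ a ≠ b ∧ a ≠ cc ∧ b ≠ cc ∧
        G.Adj a b ∧ G.Adj a cc ∧ G.Adj w a := by
    obtain ⟨e⟩ := hiso
    obtain ⟨u, hu1, hu2⟩ := hwH
    have hfin : ∀ i : Fin 3, i ≠ i + 1 ∧ i ≠ i + 2 ∧ i + 1 ≠ i + 2 := by decide
    have hA : ∀ i : Fin 3, ((e.symm i : G.neighborSet ustar) : V) ∈ G.neighborSet ustar :=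
      fun i => ((e.symm i : c.supp) : G.neighborSet ustar).2
    have hadjA : ∀ i j : Fin 3, i ≠ j →
        G.Adj ((e.symm i : G.neighborSet ustar) : V) ((e.symm j : G.neighborSet ustar) : V) := by
      intro i j hij
      have h3 : (SimpleGraph.cycleGraph 3).Adj i j := by
        rw [SimpleGraph.cycleGraph_three_eq_top]; exact hij
      exact e.symm.map_adj_iff.mpr h3
    have hAinj : ∀ i j : Fin 3,
        ((e.symm i : G.neighborSet ustar) : V) = ((e.symm j : G.neighborSet ustar) : V) →
        i = j := fun i j h => e.symm.injective (Subtype.ext (Subtype.ext h))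
    set i0 : Fin 3 := e ⟨u, hu1⟩ with hi0
    have hua : ((e.symm i0 : G.neighborSet ustar) : V) = u := by rw [hi0, RelIso.symm_apply_apply]
    exact ⟨_, _, _, hA i0, hA (i0 + 1), hA (i0 + 2),
      fun h => (hfin i0).1 (hAinj _ _ h),
      fun h => (hfin i0).2.1 (hAinj _ _ h),
      fun h => (hfin i0).2.2 (hAinj _ _ h),
      hadjA _ _ (hfin i0).1, hadjA _ _ (hfin i0).2.1, hua ▸ hu2⟩
  have hus : ustar ∉ G.neighborSet ustar := fun h => G.irrefl h
  have hwU : w ∉ G.neighborSet ustar := hw₂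
  have key : ∀ x, G.Adj w x → x ∈ G.neighborSet ustar → x = a ∨ x = b ∨ x = cc := by
    intro x hwx hxU
    by_contra hx
    push_neg at hx
    obtain ⟨hxa, hxb, hxc⟩ := hx
    apply hfree
    have h1 : a ≠ ustar := fun h => hus (h ▸ haU)
    have h2 : b ≠ ustar := fun h => hus (h ▸ hbU)
    have h3 : cc ≠ ustar := fun h => hus (h ▸ hcU)
    have h4 : x ≠ ustar := fun h => hus (h ▸ hxU)
    have h5 : w ≠ a := fun h => hwU (h ▸ haU)
    have h6 : w ≠ b := fun h => hwU (h ▸ hbU)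
    have h7 : w ≠ cc := fun h => hwU (h ▸ hcU)
    have h8 : w ≠ x := fun h => hwU (h ▸ hxU)
    have hxab : x ≠ b := hxb
    set f : Fin 6 → V := fun p =>
      if p = 0 then ustar else if p = 1 then a else if p = 2 then b
      else if p = 3 then cc else if p = 4 then x else w with hf
    have hinj : Function.Injective f := by
      intro p q hpq
      fin_cases p <;> fin_cases q <;>
        first
          | rfl
          | (simp only [f, Fin.ext_iff] at hpq; norm_num at hpq
             first
               | exact absurd hpq hab | exact absurd hpq.symm hab
               | exact absurd hpq hac | exact absurd hpq.symm hac
               | exact absurd hpq hbc | exact absurd hpq.symm hbc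
               | exact absurd hpq h1 | exact absurd hpq.symm h1
               | exact absurd hpq h2 | exact absurd hpq.symm h2
               | exact absurd hpq h3 | exact absurd hpq.symm h3
               | exact absurd hpq h4 | exact absurd hpq.symm h4
               | exact absurd hpq h5 | exact absurd hpq.symm h5
               | exact absurd hpq h6 | exact absurd hpq.symm h6
               | exact absurd hpq h7 | exact absurd hpq.symm h7
               | exact absurd hpq h8 | exact absurd hpq.symm h8
               | exact absurd hpq hxa | exact absurd hpq.symm hxa
               | exact absurd hpq hxb | exact absurd hpq.symm hxb
               | exact absurd hpq hxc | exact absurd hpq.symm hxc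
               | exact absurd hpq hw₁ | exact absurd hpq.symm hw₁)
    refine ⟨⟨f, hinj⟩, ?_⟩
    intro p q hpq
    have hGua : G.Adj ustar a := haU
    have hGub : G.Adj ustar b := hbU
    have hGuc : G.Adj ustar cc := hcU
    have hGux : G.Adj ustar x := hxU
    fin_cases p <;> fin_cases q <;>
      simp only [theta223, SimpleGraph.fromRel_adj, ne_eq] at hpq <;>
      first
        | (exfalso; revert hpq; decide)
        | (simp only [f, Fin.ext_iff]; norm_num
           first
             | exact hGua | exact hGua.symm
             | exact hGub | exact hGub.symm
             | exact hGuc | exact hGuc.symm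
             | exact hGux | exact hGux.symm
             | exact hGab | exact hGab.symm
             | exact hGac | exact hGac.symm
             | exact hwa | exact hwa.symm
             | exact hwx | exact hwx.symm)
  have hsub : G.neighborSet w ∩ G.neighborSet ustar ⊆ {a, b, cc} := by
    rintro x ⟨hx1, hx2⟩
    rcases key x hx1 hx2 with h | h | h <;> simp [h]
  calc (G.neighborSet w ∩ G.neighborSet ustar).ncard
      ≤ ({a, b, cc} : Set V).ncard := Set.ncard_le_ncard hsub (Set.toFinite _)
    _ ≤ ({b, cc} : Set V).ncard + 1 := Set.ncard_insert_le _ _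
    _ ≤ (({cc} : Set V).ncard + 1) + 1 := Nat.add_le_add_right (Set.ncard_insert_le _ _) 1
    _ ≤ 3 := by simp
end

section
/- Let G be a θ_{2,2,3}-free graph, u* a vertex of G, U = N(u*), and W = V(G) \ N[u*]. Let H be a connected component of the induced subgraph G[U] isomorphic to a path P_k with k ≥ 4 vertices. Then every vertex w ∈ W having at least one neighbor in V(H) satisfies d_U(w) ≤ 2, i.e., w has at most two neighbors in U. -/
open SimpleGraph

lemma build_theta {V : Type*} (G : SimpleGraph V) (a b c1 c2 d1 d2 : V)
    (hab : a ≠ b) (had2 : a ≠ d2) (hbd1 : b ≠ d1)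
    (hc12 : c1 ≠ c2) (hc1d1 : c1 ≠ d1) (hc1d2 : c1 ≠ d2) (hc2d1 : c2 ≠ d1) (hc2d2 : c2 ≠ d2)
    (e1 : G.Adj a c1) (e2 : G.Adj c1 b) (e3 : G.Adj a c2) (e4 : G.Adj c2 b)
    (e5 : G.Adj a d1) (e6 : G.Adj d1 d2) (e7 : G.Adj d2 b) :
    Contains theta223 G := by
  have hac1 := e1.ne
  have hac2 := e3.ne
  have had1 := e5.ne
  have hbc1 := e2.ne'
  have hbc2 := e4.ne'
  have hbd2 := e7.ne'
  have hd12 := e6.ne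
  refine ⟨⟨![a, b, c1, c2, d1, d2], ?_⟩, ?_⟩
  · intro i j hij
    fin_cases i <;> fin_cases j <;>
      first
        | rfl
        | exact absurd hij (by assumption)
        | exact absurd hij (Ne.symm (by assumption))
  · intro i j hij
    rw [theta223, SimpleGraph.fromRel_adj] at hij
    obtain ⟨hne, h | h⟩ := hij <;>
      rcases h with (⟨rfl, rfl⟩ | ⟨rfl, rfl⟩ | ⟨rfl, rfl⟩ | ⟨rfl, rfl⟩ |
        ⟨rfl, rfl⟩ | ⟨rfl, rfl⟩ | ⟨rfl, rfl⟩) <;>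
      first
        | exact e1 | exact e1.symm | exact e2 | exact e2.symm
        | exact e3 | exact e3.symm | exact e4 | exact e4.symm
        | exact e5 | exact e5.symm | exact e6 | exact e6.symm
        | exact e7 | exact e7.symm

lemma nat_ivt {Q : ℕ → Prop} {a b : ℕ} (hab : a < b) (ha : Q a) (hb : ¬ Q b) :
    ∃ n, n + 1 ≤ b ∧ Q n ∧ ¬ Q (n + 1) := by
  by_contra h'
  push_neg at h'
  have key : ∀ n, a ≤ n → n ≤ b → Q n := by
    intro n hn
    induction n, hn using Nat.le_induction with
    | base => intro _; exact ha
    | succ m hm ih => intro hmb; exact h' m hmb (ih (le_trans (Nat.le_succ m) hmb))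
  exact hb (key b hab.le le_rfl)

theorem stmt16 {V : Type*} [Fintype V] (G : SimpleGraph V)
    (hfree : ¬ Contains theta223 G) (ustar : V)
    (c : (G.induce (G.neighborSet ustar)).ConnectedComponent)
    (k : ℕ) (hk : 4 ≤ k)
    (hiso : Nonempty (((G.induce (G.neighborSet ustar)).induce c.supp) ≃g
      SimpleGraph.pathGraph k))
    (w : V) (hw₁ : w ≠ ustar) (hw₂ : ¬ G.Adj ustar w)
    (hwH : ∃ u : G.neighborSet ustar, u ∈ c.supp ∧ G.Adj w (u : V)) :
    (G.neighborSet w ∩ G.neighborSet ustar).ncard ≤ 2 := by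
  classical
  obtain ⟨iso⟩ := hiso
  set e := iso.symm with he
  set f : Fin k → V := fun i => (((e i : c.supp) : G.neighborSet ustar) : V) with hf
  have hfU : ∀ i, G.Adj ustar (f i) := fun i => (e i).1.2
  have hfadj : ∀ i j : Fin k, (SimpleGraph.pathGraph k).Adj i j → G.Adj (f i) (f j) := by
    intro i j h
    exact e.map_rel_iff.mpr h
  have hfinj : Function.Injective f := by
    intro i j h
    exact e.injective (Subtype.ext (Subtype.ext h))
  obtain ⟨u, hu, huw⟩ := hwH
  set i₀ := e.symm ⟨u, hu⟩ with hi₀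
  have hfi₀ : f i₀ = (u : V) := by
    simp only [hf, hi₀, RelIso.apply_symm_apply]
  have hQi₀ : G.Adj w (f i₀) := by rw [hfi₀]; exact huw
  by_contra hcard
  have h3 : 3 ≤ (G.neighborSet w ∩ G.neighborSet ustar).ncard := by omega
  -- main construction
  by_cases hall : ∀ i : Fin k, G.Adj w (f i)
  · -- all path vertices adjacent to w
    have h0 : (0 : ℕ) < k := by omega
    have h1 : (1 : ℕ) < k := by omega
    have h2 : (2 : ℕ) < k := by omega
    have h3' : (3 : ℕ) < k := by omega
    have hne : ∀ (m n : ℕ) (hm : m < k) (hn : n < k), m ≠ n → f ⟨m, hm⟩ ≠ f ⟨n, hn⟩ :=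
      fun m n hm hn hmn h => hmn (congrArg Fin.val (hfinj h))
    refine hfree (build_theta G ustar w (f ⟨2, h2⟩) (f ⟨3, h3'⟩) (f ⟨0, h0⟩) (f ⟨1, h1⟩)
      hw₁.symm (hfU _).ne (fun h => hw₂ (h ▸ hfU ⟨0, h0⟩))
      (hne _ _ _ _ (by norm_num)) (hne _ _ _ _ (by norm_num)) (hne _ _ _ _ (by norm_num))
      (hne _ _ _ _ (by norm_num)) (hne _ _ _ _ (by norm_num))
      (hfU _) (hall _).symm (hfU _) (hall _).symm (hfU _)
      (hfadj _ _ (SimpleGraph.pathGraph_adj.mpr (Or.inl rfl))) (hall _).symm)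
  · push_neg at hall
    obtain ⟨j, hj⟩ := hall
    have h0k : (0 : ℕ) < k := by omega
    set f' : ℕ → V := fun n => if h : n < k then f ⟨n, h⟩ else f ⟨0, h0k⟩ with hf'
    have hf'eq : ∀ (n : ℕ) (h : n < k), f' n = f ⟨n, h⟩ := fun n h => dif_pos h
    set Q : ℕ → Prop := fun n => G.Adj w (f' n) with hQ
    have hQa : Q i₀.val := by
      show G.Adj w (f' i₀.val)
      rw [hf'eq i₀.val i₀.isLt, Fin.eta]; exact hQi₀
    have hQb : ¬ Q j.val := by
      show ¬ G.Adj w (f' j.val)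
      rw [hf'eq j.val j.isLt, Fin.eta]; exact hj
    -- find an edge x-y in the path with y adjacent to w, x not
    obtain ⟨x, y, hxU, hyU, hGxy, hyw, hxw⟩ :
        ∃ x y : V, G.Adj ustar x ∧ G.Adj ustar y ∧ G.Adj x y ∧ G.Adj w y ∧ ¬ G.Adj w x := by
      rcases lt_or_gt_of_ne (fun h : i₀.val = j.val => hQb (h ▸ hQa)) with hlt | hgt
      · obtain ⟨n, hnb, hn, hn1⟩ := nat_ivt hlt hQa hQb
        have hn1k : n + 1 < k := lt_of_le_of_lt hnb j.isLt
        have hnk : n < k := by omega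
        simp only [hQ, hf'eq n hnk] at hn
        simp only [hQ, hf'eq (n + 1) hn1k] at hn1
        refine ⟨f ⟨n + 1, hn1k⟩, f ⟨n, hnk⟩, hfU _, hfU _, ?_, hn, hn1⟩
        exact hfadj _ _ (SimpleGraph.pathGraph_adj.mpr (Or.inr rfl))
      · obtain ⟨n, hnb, hn, hn1⟩ := nat_ivt (Q := fun n => ¬ Q n) hgt hQb (not_not.mpr hQa)
        rw [not_not] at hn1
        have hn1k : n + 1 < k := lt_of_le_of_lt hnb i₀.isLt
        have hnk : n < k := by omega
        simp only [hQ, hf'eq n hnk] at hn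
        simp only [hQ, hf'eq (n + 1) hn1k] at hn1
        refine ⟨f ⟨n, hnk⟩, f ⟨n + 1, hn1k⟩, hfU _, hfU _, ?_, hn1, hn⟩
        exact hfadj _ _ (SimpleGraph.pathGraph_adj.mpr (Or.inl rfl))
    -- y ∈ S, x ∉ S; pick two more common neighbors
    set S := G.neighborSet w ∩ G.neighborSet ustar with hS
    have hyS : y ∈ S := ⟨hyw, hyU⟩
    have hxS : x ∉ S := fun h => hxw h.1
    have hfin : (S \ {y}).Finite := Set.toFinite _
    have h2' : 1 < (S \ {y}).ncard := by
      have := Set.ncard_diff_singleton_of_mem hyS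
      omega
    obtain ⟨c1, c2, hc1, hc2, hc12⟩ := (Set.one_lt_ncard_iff hfin).mp h2'
    have hc1S : c1 ∈ S := hc1.1
    have hc2S : c2 ∈ S := hc2.1
    have hc1y : c1 ≠ y := hc1.2
    have hc2y : c2 ≠ y := hc2.2
    have hc1x : c1 ≠ x := fun h => hxS (h ▸ hc1S)
    have hc2x : c2 ≠ x := fun h => hxS (h ▸ hc2S)
    exact hfree (build_theta G ustar w c1 c2 x y
      hw₁.symm hyU.ne (fun h => hw₂ (h ▸ hxU))
      hc12 hc1x hc1y hc2x hc2y
      hc1S.2 hc1S.1.symm hc2S.2 hc2S.1.symm hxU hGxy hyw.symm)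
end

section
/- Let G be a θ_{2,2,3}-free graph and u* a vertex of G such that the induced subgraph on U = N(u*) is isomorphic to a star K_{1,r} with r ≥ 3 and center u₀. Then every vertex w ∉ N[u*] has at most two neighbors among the leaves U \ {u₀}. -/
open SimpleGraph

theorem stmt17 {V : Type*} [Fintype V] (G : SimpleGraph V)
    (hfree : ¬ Contains theta223 G) (ustar u₀ : V) (r : ℕ) (hr : 3 ≤ r)
    (hu₀ : G.Adj ustar u₀)
    (hcenter : ∀ u, G.Adj ustar u → u ≠ u₀ → G.Adj u₀ u)
    (hleaves : ∀ u v, G.Adj ustar u → G.Adj ustar v →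
      u ≠ u₀ → v ≠ u₀ → ¬ G.Adj u v)
    (hcard : (G.neighborSet ustar).ncard = r + 1) :
    ∀ w, w ≠ ustar → ¬ G.Adj ustar w →
      (G.neighborSet w ∩ (G.neighborSet ustar \ {u₀})).ncard ≤ 2 := by
  intro w hw hnadj
  by_contra hcon
  push_neg at hcon
  have h3 : 3 ≤ (G.neighborSet w ∩ (G.neighborSet ustar \ {u₀})).ncard := hcon
  obtain ⟨t, hts, htcard⟩ := Set.exists_subset_card_eq h3
  obtain ⟨v₁, v₂, v₃, h12, h13, h23, rfl⟩ := Set.ncard_eq_three.mp htcard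
  have hv₁ := hts (by simp : v₁ ∈ ({v₁, v₂, v₃} : Set V))
  have hv₂ := hts (by simp : v₂ ∈ ({v₁, v₂, v₃} : Set V))
  have hv₃ := hts (by simp : v₃ ∈ ({v₁, v₂, v₃} : Set V))
  simp only [Set.mem_inter_iff, Set.mem_diff, SimpleGraph.mem_neighborSet,
    Set.mem_singleton_iff] at hv₁ hv₂ hv₃
  obtain ⟨hw1, hu1, hn1⟩ := hv₁
  obtain ⟨hw2, hu2, hn2⟩ := hv₂
  obtain ⟨hw3, hu3, hn3⟩ := hv₃
  have hu0w : u₀ ≠ w := fun h => hnadj (h ▸ hu₀)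
  have hustarw : ustar ≠ w := fun h => hw h.symm
  apply hfree
  refine ⟨⟨![ustar, w, v₁, v₂, u₀, v₃], ?_⟩, ?_⟩
  · intro i j hij
    have ne1 : ustar ≠ v₁ := G.ne_of_adj hu1
    have ne2 : ustar ≠ v₂ := G.ne_of_adj hu2
    have ne3 : ustar ≠ v₃ := G.ne_of_adj hu3
    have ne0 : ustar ≠ u₀ := G.ne_of_adj hu₀
    have nw1 : w ≠ v₁ := G.ne_of_adj hw1
    have nw2 : w ≠ v₂ := G.ne_of_adj hw2
    have nw3 : w ≠ v₃ := G.ne_of_adj hw3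
    fin_cases i <;> fin_cases j <;>
      first
        | rfl
        | (simp only [Matrix.cons_val_zero, Matrix.cons_val_one, Matrix.head_cons,
             Matrix.cons_val_two, Matrix.tail_cons, Matrix.cons_val_three,
             Matrix.cons_val_four, Matrix.cons_val_succ] at hij
           first
             | exact absurd hij (by assumption)
             | exact absurd hij (Ne.symm (by assumption)))
  · intro a b hab
    have h03 : G.Adj u₀ v₃ := hcenter v₃ hu3 hn3
    have hab' : theta223.Adj a b := hab
    rw [theta223, SimpleGraph.fromRel_adj] at hab'
    obtain ⟨-, h | h⟩ := hab' <;>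
      rcases h with ⟨ha, hb⟩|⟨ha, hb⟩|⟨ha, hb⟩|⟨ha, hb⟩|⟨ha, hb⟩|⟨ha, hb⟩|⟨ha, hb⟩ <;>
      subst ha <;> subst hb <;>
      first
        | exact hu1 | exact hu2 | exact hu3 | exact hu₀ | exact h03
        | exact hw1.symm | exact hw2.symm | exact hw3.symm
        | exact hu1.symm | exact hu2.symm | exact hu3.symm | exact hu₀.symm
        | exact h03.symm | exact hw1 | exact hw2 | exact hw3
end

section
/- Let G be a triangle-free graph with m edges. Then the spectral radius of G satisfies λ(G) ≤ √m, and equality holds if and only if some connected component of G is a complete bipartite graph containing all m edges (i.e., G is a complete bipartite graph together with isolated vertices). -/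
open SimpleGraph

namespace Stmt18Aux
open Finset
variable {V : Type*} [Fintype V]

lemma mulVec_eq (G : SimpleGraph V) [DecidableRel G.Adj] (x : V → ℝ) (u : V) :
    (adjMat G).mulVec x u = ∑ v ∈ G.neighborFinset u, x v := by
  classical
  have key : ∀ v, (adjMat G) u v * x v = if G.Adj u v then x v else 0 := by
    intro v; by_cases h : G.Adj u v <;> simp [adjMat, h]
  unfold Matrix.mulVec dotProduct
  rw [Finset.sum_congr rfl (fun v _ => key v), ← Finset.sum_filter, neighborFinset_eq_filter]

lemma indep_biUnion_card (G : SimpleGraph V) [DecidableRel G.Adj] [DecidableEq V]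
    (S : Finset V) (hS : ∀ a ∈ S, ∀ b ∈ S, ¬G.Adj a b) :
    (S.biUnion (fun v => G.incidenceFinset v)).card = ∑ v ∈ S, G.degree v := by
  rw [Finset.card_biUnion]
  · exact Finset.sum_congr rfl fun v _ => G.card_incidenceFinset_eq_degree v
  · intro a ha b hb hab
    simp only [Finset.disjoint_left]
    intro e hea heb
    rw [mem_incidenceFinset] at hea heb
    exact hS a ha b hb (G.adj_of_mem_incidenceSet hab hea heb)

lemma biUnion_subset_edgeFinset (G : SimpleGraph V) [DecidableRel G.Adj] [DecidableEq V]
    (S : Finset V) : S.biUnion (fun v => G.incidenceFinset v) ⊆ G.edgeFinset := by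
  intro e he
  rw [Finset.mem_biUnion] at he
  obtain ⟨v, _, hv⟩ := he
  rw [mem_incidenceFinset] at hv
  rw [mem_edgeFinset]
  exact G.incidenceSet_subset v hv

lemma sum_deg_le (G : SimpleGraph V) [DecidableRel G.Adj] [DecidableEq V]
    (S : Finset V) (hS : ∀ a ∈ S, ∀ b ∈ S, ¬G.Adj a b) :
    ∑ v ∈ S, G.degree v ≤ G.edgeFinset.card := by
  rw [← indep_biUnion_card G S hS]
  exact Finset.card_le_card (biUnion_subset_edgeFinset G S)

lemma edge_meets_of_sum_deg_eq (G : SimpleGraph V) [DecidableRel G.Adj] [DecidableEq V]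
    (S : Finset V) (hS : ∀ a ∈ S, ∀ b ∈ S, ¬G.Adj a b)
    (heq : ∑ v ∈ S, G.degree v = G.edgeFinset.card)
    {a b : V} (hab : G.Adj a b) : a ∈ S ∨ b ∈ S := by
  have h := Finset.eq_of_subset_of_card_le (biUnion_subset_edgeFinset G S)
    (le_of_eq (by rw [indep_biUnion_card G S hS, heq]))
  have he : s(a,b) ∈ S.biUnion (fun v => G.incidenceFinset v) := by
    rw [h, mem_edgeFinset]; exact hab
  rw [Finset.mem_biUnion] at he
  obtain ⟨v, hvS, hv⟩ := he
  rw [mem_incidenceFinset] at hv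
  rcases Sym2.mem_iff.mp hv.2 with h' | h'
  · exact Or.inl (h' ▸ hvS)
  · exact Or.inr (h' ▸ hvS)

lemma sum_deg_eq_of_meets (G : SimpleGraph V) [DecidableRel G.Adj] [DecidableEq V]
    (S : Finset V) (hS : ∀ a ∈ S, ∀ b ∈ S, ¬G.Adj a b)
    (hmeet : ∀ a b : V, G.Adj a b → a ∈ S ∨ b ∈ S) :
    ∑ v ∈ S, G.degree v = G.edgeFinset.card := by
  rw [← indep_biUnion_card G S hS]
  congr 1
  apply Finset.Subset.antisymm (biUnion_subset_edgeFinset G S)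
  intro e he
  rw [mem_edgeFinset] at he
  induction e with
  | h a b =>
    rcases hmeet a b he with h' | h'
    · refine Finset.mem_biUnion.2 ⟨a, h', ?_⟩
      rw [mem_incidenceFinset]
      exact ⟨he, Sym2.mem_mk_left a b⟩
    · refine Finset.mem_biUnion.2 ⟨b, h', ?_⟩
      rw [mem_incidenceFinset]
      exact ⟨he, Sym2.mem_mk_right a b⟩


lemma neighbor_indep (G : SimpleGraph V) [DecidableRel G.Adj] [DecidableEq V] (htf : G.CliqueFree 3) (u : V) :
    ∀ a ∈ G.neighborFinset u, ∀ b ∈ G.neighborFinset u, ¬G.Adj a b := by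
  intro a ha b hb hab
  rw [mem_neighborFinset] at ha hb
  exact htf {u, a, b} (is3Clique_triple_iff.2 ⟨ha, hb, hab⟩)

lemma double_sum (G : SimpleGraph V) [DecidableRel G.Adj] (μ : ℝ) (x : V → ℝ)
    (he : (adjMat G).mulVec x = μ • x) (u : V) :
    μ ^ 2 * x u = ∑ v ∈ G.neighborFinset u, ∑ w ∈ G.neighborFinset v, x w := by
  have hAA : (adjMat G).mulVec ((adjMat G).mulVec x) = (μ ^ 2) • x := by
    rw [he, Matrix.mulVec_smul, he, smul_smul, ← pow_two]
  have h := congrFun hAA u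
  rw [mulVec_eq] at h
  rw [Finset.sum_congr rfl (fun v _ => mulVec_eq G x v)] at h
  simpa using h.symm

lemma sq_le (G : SimpleGraph V) [DecidableRel G.Adj] [DecidableEq V]
    (htf : G.CliqueFree 3) (μ : ℝ) (x : V → ℝ) (hx : x ≠ 0)
    (he : (adjMat G).mulVec x = μ • x) :
    μ ^ 2 ≤ (G.edgeFinset.card : ℝ) := by
  obtain ⟨w, hw⟩ : ∃ w, x w ≠ 0 := Function.ne_iff.1 hx
  obtain ⟨u, -, hu⟩ := Finset.exists_max_image Finset.univ (fun w => |x w|) ⟨w, Finset.mem_univ w⟩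
  have hM : 0 < |x u| := lt_of_lt_of_le (abs_pos.2 hw) (hu w (Finset.mem_univ w))
  have key := double_sum G μ x he u
  have hb1 : |∑ v ∈ G.neighborFinset u, ∑ w ∈ G.neighborFinset v, x w|
      ≤ ∑ v ∈ G.neighborFinset u, ∑ w ∈ G.neighborFinset v, |x w| :=
    (Finset.abs_sum_le_sum_abs _ _).trans
      (Finset.sum_le_sum fun v _ => Finset.abs_sum_le_sum_abs _ _)
  have hb2 : ∑ v ∈ G.neighborFinset u, ∑ w ∈ G.neighborFinset v, |x w|
      ≤ ∑ v ∈ G.neighborFinset u, (G.degree v : ℝ) * |x u| := by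
    refine Finset.sum_le_sum fun v _ => ?_
    calc ∑ w ∈ G.neighborFinset v, |x w| ≤ ∑ _w ∈ G.neighborFinset v, |x u| :=
          Finset.sum_le_sum fun w _ => hu w (Finset.mem_univ w)
      _ = (G.degree v : ℝ) * |x u| := by
          rw [Finset.sum_const, SimpleGraph.degree, nsmul_eq_mul]
  have hb3 : ∑ v ∈ G.neighborFinset u, (G.degree v : ℝ) * |x u|
      ≤ (G.edgeFinset.card : ℝ) * |x u| := by
    rw [← Finset.sum_mul]
    refine mul_le_mul_of_nonneg_right ?_ hM.le
    rw [← Nat.cast_sum]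
    exact_mod_cast sum_deg_le G (G.neighborFinset u) (neighbor_indep G htf u)
  have : μ ^ 2 * |x u| ≤ (G.edgeFinset.card : ℝ) * |x u| := by
    calc μ ^ 2 * |x u| = |μ ^ 2 * x u| := by
          rw [abs_mul, abs_of_nonneg (sq_nonneg μ)]
      _ ≤ _ := by rw [key]; exact hb1.trans (hb2.trans hb3)
  exact le_of_mul_le_mul_right this hM

lemma equality_struct (G : SimpleGraph V) [DecidableRel G.Adj] [DecidableEq V]
    (htf : G.CliqueFree 3) (μ : ℝ) (x : V → ℝ) (hx : x ≠ 0)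
    (he : (adjMat G).mulVec x = μ • x) (hμ : 0 < μ)
    (hsq : μ ^ 2 = (G.edgeFinset.card : ℝ)) :
    ∃ s t : Set V, Disjoint s t ∧
      ∀ a b : V, G.Adj a b ↔ ((a ∈ s ∧ b ∈ t) ∨ (a ∈ t ∧ b ∈ s)) := by
  obtain ⟨w, hw⟩ : ∃ w, x w ≠ 0 := Function.ne_iff.1 hx
  obtain ⟨u, -, hu⟩ := Finset.exists_max_image Finset.univ (fun w => |x w|) ⟨w, Finset.mem_univ w⟩
  set M := |x u| with hMdef
  have hM : 0 < M := lt_of_lt_of_le (abs_pos.2 hw) (hu w (Finset.mem_univ w))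
  obtain ⟨y, hy, hyu, hymax⟩ : ∃ y : V → ℝ, (adjMat G).mulVec y = μ • y ∧ y u = M ∧
      ∀ w, |y w| ≤ M := by
    rcases le_or_gt 0 (x u) with h | h
    · exact ⟨x, he, (abs_of_nonneg h).symm, fun w => hu w (Finset.mem_univ w)⟩
    · refine ⟨-x, ?_, ?_, fun w => ?_⟩
      · rw [Matrix.mulVec_neg, he, smul_neg]
      · simp only [Pi.neg_apply, hMdef, abs_of_neg h]
      · simpa using hu w (Finset.mem_univ w)
  clear he hx hu hw
  set S := G.neighborFinset u with hSdef
  have hSindep := neighbor_indep G htf u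
  have key := double_sum G μ y hy u
  rw [hyu] at key
  have hyM : ∀ w, y w ≤ M := fun w => (le_abs_self _).trans (hymax w)
  have hsum2 : ∀ v : V, ∑ _w ∈ G.neighborFinset v, M = (G.degree v : ℝ) * M := by
    intro v; rw [Finset.sum_const, SimpleGraph.degree, nsmul_eq_mul]
  have hsum1 : ∑ v ∈ S, ∑ w ∈ G.neighborFinset v, y w ≤ ∑ v ∈ S, ∑ _w ∈ G.neighborFinset v, M :=
    Finset.sum_le_sum fun v _ => Finset.sum_le_sum fun w _ => hyM w
  have hA : ∑ v ∈ S, ∑ _w ∈ G.neighborFinset v, (M : ℝ) = (↑(∑ v ∈ S, G.degree v)) * M := by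
    rw [Finset.sum_congr rfl (fun v _ => hsum2 v), ← Finset.sum_mul, Nat.cast_sum]
  have hdegle : ∑ v ∈ S, G.degree v ≤ G.edgeFinset.card := sum_deg_le G S hSindep
  have hdegle' : (↑(∑ v ∈ S, G.degree v) : ℝ) ≤ (G.edgeFinset.card : ℝ) := by exact_mod_cast hdegle
  have hgeq : (G.edgeFinset.card : ℝ) * M ≤ (↑(∑ v ∈ S, G.degree v)) * M := by
    rw [← hsq, key, ← hA]; exact hsum1
  have hdeg_eq : ∑ v ∈ S, G.degree v = G.edgeFinset.card := by
    have h1 : (G.edgeFinset.card : ℝ) ≤ ↑(∑ v ∈ S, G.degree v) := le_of_mul_le_mul_right hgeq hM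
    exact le_antisymm hdegle (by exact_mod_cast h1)
  have hysum_eq : ∑ v ∈ S, ∑ w ∈ G.neighborFinset v, y w = ∑ v ∈ S, ∑ _w ∈ G.neighborFinset v, (M : ℝ) := by
    refine le_antisymm hsum1 ?_
    rw [hA, ← key, hsq, hdeg_eq]
  have hptwise : ∀ v ∈ S, ∀ w ∈ G.neighborFinset v, y w = M := by
    have h0 : ∑ v ∈ S, ∑ w ∈ G.neighborFinset v, (M - y w) = 0 := by
      simp only [Finset.sum_sub_distrib]
      rw [hysum_eq, sub_self]
    have hnn : ∀ v ∈ S, (0:ℝ) ≤ ∑ w ∈ G.neighborFinset v, (M - y w) :=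
      fun v _ => Finset.sum_nonneg fun w _ => sub_nonneg.2 (hyM w)
    intro v hv w hw
    have hinner := (Finset.sum_eq_zero_iff_of_nonneg hnn).1 h0 v hv
    have := (Finset.sum_eq_zero_iff_of_nonneg
      (fun w (_ : w ∈ G.neighborFinset v) => sub_nonneg.2 (hyM w))).1 hinner w hw
    linarith
  have hmeet : ∀ a b : V, G.Adj a b → a ∈ S ∨ b ∈ S := fun a b hab =>
    edge_meets_of_sum_deg_eq G S hSindep hdeg_eq hab
  set t : Set V := {w : V | ∃ v ∈ S, G.Adj w v} with htdef
  have hyT : ∀ w ∈ t, y w = M := by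
    rintro w ⟨v, hv, hadj⟩
    exact hptwise v hv w ((SimpleGraph.mem_neighborFinset _ _ _).2 hadj.symm)
  have hdisjST : ∀ a, a ∈ S → a ∉ t := by
    rintro a ha ⟨v, hv, hadj⟩
    exact hSindep a ha v hv hadj
  have hSt : ∀ a b : V, G.Adj a b → a ∈ S → b ∈ t := fun a b hab ha => ⟨a, ha, hab.symm⟩
  have hNb : ∀ b ∈ t, ∀ c, G.Adj b c → c ∈ S := by
    intro b hb c hbc
    rcases hmeet b c hbc with h | h
    · exact absurd hb (hdisjST b h)
    · exact h
  have hstep : ∀ s' ∈ S, μ * y s' = (G.degree s' : ℝ) * M := by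
    intro s' hs'
    have h1 := congrFun hy s'
    rw [mulVec_eq] at h1
    have h2 : ∑ w ∈ G.neighborFinset s', y w = ∑ _w ∈ G.neighborFinset s', (M : ℝ) :=
      Finset.sum_congr rfl fun w hw =>
        hyT w ⟨s', hs', ((SimpleGraph.mem_neighborFinset _ _ _).1 hw).symm⟩
    rw [h2, hsum2 s', Pi.smul_apply, smul_eq_mul] at h1
    exact h1.symm
  have hdegpos : ∀ s' ∈ S, 0 < G.degree s' := by
    intro s' hs'
    rw [SimpleGraph.degree_pos_iff_exists_adj]
    exact ⟨u, ((SimpleGraph.mem_neighborFinset _ _ _).1 hs').symm⟩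
  have hNbfull : ∀ b ∈ t, ∀ c ∈ S, G.Adj b c := by
    intro b hb
    have hsub : G.neighborFinset b ⊆ S := fun c hc =>
      hNb b hb c ((SimpleGraph.mem_neighborFinset _ _ _).1 hc)
    have h1 := congrFun hy b
    rw [mulVec_eq] at h1
    have h2 : μ * (∑ c ∈ G.neighborFinset b, y c) = ∑ c ∈ G.neighborFinset b, (G.degree c : ℝ) * M := by
      rw [Finset.mul_sum]
      exact Finset.sum_congr rfl fun c hc => hstep c (hsub hc)
    have hyb : y b = M := hyT b hb
    have h3 : μ * (∑ c ∈ G.neighborFinset b, y c) = μ ^ 2 * M := by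
      rw [h1, Pi.smul_apply, smul_eq_mul, hyb]; ring
    have h4 : (↑(∑ c ∈ G.neighborFinset b, G.degree c) : ℝ) * M = (G.edgeFinset.card : ℝ) * M := by
      rw [Nat.cast_sum, Finset.sum_mul, ← h2, h3, hsq]
    have h5 : ∑ c ∈ G.neighborFinset b, G.degree c = ∑ v ∈ S, G.degree v := by
      have := mul_right_cancel₀ (ne_of_gt hM) h4
      rw [hdeg_eq]
      exact_mod_cast this
    have hNS : G.neighborFinset b = S := by
      by_contra hne
      obtain ⟨c0, hc0S, hc0N⟩ := Finset.exists_of_ssubset (hsub.ssubset_of_ne hne)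
      have : ∑ c ∈ G.neighborFinset b, G.degree c < ∑ v ∈ S, G.degree v :=
        Finset.sum_lt_sum_of_subset hsub hc0S hc0N (hdegpos c0 hc0S)
          (fun i _ _ => Nat.zero_le _)
      omega
    intro c hc
    exact (SimpleGraph.mem_neighborFinset _ _ _).1 (hNS ▸ hc : c ∈ G.neighborFinset b)
  refine ⟨↑S, t, ?_, ?_⟩
  · rw [Set.disjoint_left]
    intro a ha
    exact hdisjST a (by exact_mod_cast ha)
  · intro a b
    constructor
    · intro hab
      rcases hmeet a b hab with h | h
      · exact Or.inl ⟨by exact_mod_cast h, hSt a b hab h⟩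
      · exact Or.inr ⟨hSt b a hab.symm h, by exact_mod_cast h⟩
    · rintro (⟨ha, hb⟩ | ⟨ha, hb⟩)
      · exact (hNbfull b hb a (by exact_mod_cast ha)).symm
      · exact hNbfull a ha b (by exact_mod_cast hb)


lemma exists_eigen (G : SimpleGraph V) [DecidableRel G.Adj] [DecidableEq V]
    (s t : Set V) [DecidablePred (· ∈ s)] [DecidablePred (· ∈ t)] (hdisj : Disjoint s t)
    (hiff : ∀ a b : V, G.Adj a b ↔ ((a ∈ s ∧ b ∈ t) ∨ (a ∈ t ∧ b ∈ s)))
    (hm0 : 0 < G.edgeFinset.card) :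
    ∃ x : V → ℝ, x ≠ 0 ∧
      (adjMat G).mulVec x = (Real.sqrt (G.edgeFinset.card)) • x := by
  set S : Finset V := Finset.univ.filter (· ∈ s) with hSdef
  set T : Finset V := Finset.univ.filter (· ∈ t) with hTdef
  have hmemS : ∀ a : V, a ∈ S ↔ a ∈ s := by intro a; simp [hSdef]
  have hmemT : ∀ a : V, a ∈ T ↔ a ∈ t := by intro a; simp [hTdef]
  have hnst : ∀ a : V, a ∈ s → a ∉ t := fun a ha => Set.disjoint_left.1 hdisj ha
  -- nonempty
  obtain ⟨e, he⟩ := Finset.card_pos.1 hm0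
  have hedge : ∃ a b : V, G.Adj a b := by
    induction e with
    | h a b => exact ⟨a, b, (SimpleGraph.mem_edgeFinset).1 he⟩
  obtain ⟨a0, b0, hab0⟩ := hedge
  have hST : ∃ p q : V, p ∈ s ∧ q ∈ t := by
    rcases (hiff a0 b0).1 hab0 with ⟨h1, h2⟩ | ⟨h1, h2⟩
    · exact ⟨a0, b0, h1, h2⟩
    · exact ⟨b0, a0, h2, h1⟩
  obtain ⟨p, q, hp, hq⟩ := hST
  have hTpos : 0 < T.card := Finset.card_pos.2 ⟨q, (hmemT q).2 hq⟩
  have hSpos : 0 < S.card := Finset.card_pos.2 ⟨p, (hmemS p).2 hp⟩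
  -- neighborhoods
  have hNs : ∀ v ∈ s, G.neighborFinset v = T := by
    intro v hv
    ext w
    rw [SimpleGraph.mem_neighborFinset, hmemT, hiff]
    constructor
    · rintro (⟨_, h2⟩ | ⟨h1, _⟩)
      · exact h2
      · exact absurd hv (fun hh => Set.disjoint_left.1 hdisj hh h1)
    · intro hw; exact Or.inl ⟨hv, hw⟩
  have hNt : ∀ v ∈ t, G.neighborFinset v = S := by
    intro v hv
    ext w
    rw [SimpleGraph.mem_neighborFinset, hmemS, hiff]
    constructor
    · rintro (⟨h1, _⟩ | ⟨_, h2⟩)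
      · exact absurd h1 (fun hh => Set.disjoint_left.1 hdisj hh hv)
      · exact h2
    · intro hw; exact Or.inr ⟨hv, hw⟩
  have hNo : ∀ v : V, v ∉ s → v ∉ t → G.neighborFinset v = ∅ := by
    intro v hv1 hv2
    ext w
    simp only [SimpleGraph.mem_neighborFinset, Finset.notMem_empty, iff_false]
    intro hadj
    rcases (hiff v w).1 hadj with ⟨h1, _⟩ | ⟨h1, _⟩
    · exact hv1 h1
    · exact hv2 h1
  -- edge count
  have hScount : ∀ a b : V, G.Adj a b → a ∈ S ∨ b ∈ S := by
    intro a b hab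
    rcases (hiff a b).1 hab with ⟨h1, _⟩ | ⟨_, h2⟩
    · exact Or.inl ((hmemS a).2 h1)
    · exact Or.inr ((hmemS b).2 h2)
  have hSindep : ∀ a ∈ S, ∀ b ∈ S, ¬G.Adj a b := by
    intro a ha b hb hab
    rcases (hiff a b).1 hab with ⟨_, h2⟩ | ⟨h1, _⟩
    · exact hnst b ((hmemS b).1 hb) h2
    · exact hnst a ((hmemS a).1 ha) h1
  have hcount : G.edgeFinset.card = S.card * T.card := by
    rw [← sum_deg_eq_of_meets G S hSindep hScount]
    rw [Finset.sum_congr rfl (fun v hv => ?_)]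
    · rw [Finset.sum_const, smul_eq_mul]
    · rw [SimpleGraph.degree, hNs v ((hmemS v).1 hv)]
  -- the eigenvector
  refine ⟨fun v => if v ∈ s then Real.sqrt T.card else if v ∈ t then Real.sqrt S.card else 0,
    ?_, ?_⟩
  · intro hzero
    have := congrFun hzero p
    simp only [hp, if_pos, Pi.zero_apply] at this
    have : Real.sqrt T.card = 0 := this
    rw [Real.sqrt_eq_zero (by positivity)] at this
    have : (T.card : ℝ) ≠ 0 := by exact_mod_cast Nat.pos_iff_ne_zero.1 hTpos
    simp_all
  · funext v
    rw [mulVec_eq, hcount]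
    by_cases hvs : v ∈ s
    · rw [hNs v hvs]
      have hTsum : ∑ w ∈ T, (if w ∈ s then Real.sqrt T.card else if w ∈ t then Real.sqrt S.card
          else 0) = T.card * Real.sqrt S.card := by
        rw [Finset.sum_congr rfl (fun w hw => ?_), Finset.sum_const, nsmul_eq_mul]
        have hwt : w ∈ t := (hmemT w).1 hw
        rw [if_neg (fun hh => hnst w hh hwt), if_pos hwt]
      rw [hTsum, Pi.smul_apply, smul_eq_mul, if_pos hvs]
      rw [Nat.cast_mul, Real.sqrt_mul (by positivity), mul_assoc,
        Real.mul_self_sqrt (by positivity)]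
      ring
    · by_cases hvt : v ∈ t
      · rw [hNt v hvt]
        have hSsum : ∑ w ∈ S, (if w ∈ s then Real.sqrt T.card else if w ∈ t then Real.sqrt S.card
            else 0) = S.card * Real.sqrt T.card := by
          rw [Finset.sum_congr rfl (fun w hw => ?_), Finset.sum_const, nsmul_eq_mul]
          rw [if_pos ((hmemS w).1 hw)]
        rw [hSsum, Pi.smul_apply, smul_eq_mul, if_neg hvs, if_pos hvt]
        rw [Nat.cast_mul, Real.sqrt_mul (by positivity), mul_comm (Real.sqrt S.card),
          mul_assoc, Real.mul_self_sqrt (by positivity)]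
        ring
      · rw [hNo v hvs hvt, Finset.sum_empty, Pi.smul_apply, smul_eq_mul,
          if_neg hvs, if_neg hvt, mul_zero]

end Stmt18Aux

theorem stmt18 {V : Type*} [Fintype V] (G : SimpleGraph V) (m : ℕ)
    (hm : G.edgeSet.ncard = m)
    (htf : G.CliqueFree 3)
    (lam : ℝ) (hlam : IsSpectralRadius G lam) :
    lam ≤ Real.sqrt m ∧
    (lam = Real.sqrt m ↔
      ∃ s t : Set V, Disjoint s t ∧
        ∀ a b : V, G.Adj a b ↔ ((a ∈ s ∧ b ∈ t) ∨ (a ∈ t ∧ b ∈ s))) := by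
  classical
  have hmcard : G.edgeFinset.card = m := by
    rw [← hm, SimpleGraph.edgeFinset]
    exact (Set.ncard_eq_toFinset_card' _).symm
  obtain ⟨⟨x, hx, hxe⟩, hmax⟩ := hlam
  have hsq : lam ^ 2 ≤ (m : ℝ) := by
    have := Stmt18Aux.sq_le G htf lam x hx hxe
    rwa [hmcard] at this
  have hineq : lam ≤ Real.sqrt m := by
    calc lam ≤ |lam| := le_abs_self lam
      _ = Real.sqrt (lam ^ 2) := (Real.sqrt_sq_eq_abs lam).symm
      _ ≤ Real.sqrt m := Real.sqrt_le_sqrt hsq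
  have hEempty : m = 0 → G.edgeSet = ∅ := by
    intro h0
    rw [← Set.ncard_eq_zero (Set.toFinite _), hm, h0]
  refine ⟨hineq, ?_, ?_⟩
  · intro heq
    rcases Nat.eq_zero_or_pos m with hm0 | hm0
    · refine ⟨∅, ∅, disjoint_bot_left, ?_⟩
      intro a b
      simp only [Set.mem_empty_iff_false, and_false, false_and, or_self, iff_false]
      intro hab
      have h1 : s(a, b) ∈ G.edgeSet := hab
      rw [hEempty hm0] at h1
      exact h1
    · have hsq' : lam ^ 2 = (G.edgeFinset.card : ℝ) := by
        rw [hmcard, heq]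
        exact Real.sq_sqrt (Nat.cast_nonneg m)
      have hpos : 0 < lam := by
        rw [heq]
        exact Real.sqrt_pos.2 (by exact_mod_cast hm0)
      exact Stmt18Aux.equality_struct G htf lam x hx hxe hpos hsq'
  · rintro ⟨s, t, hdisj, hiff⟩
    rcases Nat.eq_zero_or_pos m with hm0 | hm0
    · have hA0 : adjMat G = 0 := by
        ext a b
        simp only [adjMat, Matrix.of_apply, Matrix.zero_apply, ite_eq_right_iff, one_ne_zero]
        intro hab
        have h1 : s(a, b) ∈ G.edgeSet := hab
        rw [hEempty hm0] at h1
        exact h1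
      rw [hA0, Matrix.zero_mulVec] at hxe
      have hl0 : lam = 0 := (smul_eq_zero.1 hxe.symm).resolve_right hx
      rw [hl0, hm0]
      simp
    · obtain ⟨z, hz, hze⟩ := Stmt18Aux.exists_eigen G s t hdisj hiff (by rw [hmcard]; exact hm0)
      have hge : Real.sqrt m ≤ lam := hmax _ z hz (by rwa [hmcard] at hze)
      exact le_antisymm hineq hge
end
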